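/- arXiv:1310.8280 — 6 statements merged into one kernel-verified Lean document; each statement's English description precedes it below -/
import Mathlib

section
/- Let ℓ ≥ 1, m = 2ℓ, and let A be a real skew-symmetric m×m matrix with det(A^{(2k)}) ≠ 0 for k = 1, …, ℓ. Let J be the m×m block diagonal skew-symmetric matrix whose ℓ diagonal 2×2 blocks are [[0,-1],[1,0]]. Then there exists a unique real m×m matrix B such that A = B · J · Bᵀ, where B is lower block triangular with respect to the partition of indices into consecutive pairs (i.e. B i j = 0 whenever ⌊i/2⌋ < ⌊j/2⌋), and for each k = 1, …, ℓ the k-th diagonal 2×2 block of B is of the form [[r,0],[0,εr]] with r > 0 and ε = ±1. -/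
open Matrix

/-- The `2ℓ × 2ℓ` block diagonal skew-symmetric matrix whose `ℓ` diagonal `2 × 2`
blocks are `[[0, -1], [1, 0]]`. -/
def skewJ (ℓ : ℕ) : Matrix (Fin (2 * ℓ)) (Fin (2 * ℓ)) ℝ :=
  Matrix.of fun i j =>
    if (i : ℕ) / 2 = (j : ℕ) / 2 then
      if (i : ℕ) % 2 = 0 ∧ (j : ℕ) % 2 = 1 then -1
      else if (i : ℕ) % 2 = 1 ∧ (j : ℕ) % 2 = 0 then 1
      else 0
    else 0

/-!
Induction on `ℓ`, splitting off the last pair of indices. Write `A = [[A₁₁, A₁₂], [A₂₁, A₂₂]]`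
with `A₁₁` the leading `2ℓ × 2ℓ` block. A factor `B = [[B₁, 0], [C, D]]` must satisfy
`A₁₁ = B₁ J B₁ᵀ`, `A₂₁ = C J B₁ᵀ` and `A₂₂ = C J Cᵀ + D J₂ Dᵀ`. The first equation determines `B₁`
by induction, the second then determines `C` because `B₁` is invertible, and the third determines
`D`: the Schur complement `A₂₂ - C J Cᵀ` is a `2 × 2` skew-symmetric matrix `[[0, -a], [a, 0]]`
with `a ≠ 0`, since `det A = (det B₁)² · det (A₂₂ - C J Cᵀ)`, and
`[[r, 0], [0, ε r]] J₂ [[r, 0], [0, ε r]]ᵀ = [[0, -ε r²], [ε r², 0]]` forces `r = √|a|`, `ε = sign a`.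
-/

def J₂ : Matrix (Fin 2) (Fin 2) ℝ := !![0, -1; 1, 0]

def IsPivotBlock (D : Matrix (Fin 2) (Fin 2) ℝ) : Prop :=
  ∃ r : ℝ, 0 < r ∧ ∃ ε : ℝ, (ε = 1 ∨ ε = -1) ∧ D = !![r, 0; 0, ε * r]

lemma pivot_mul_J₂_mul_transpose (r ε : ℝ) :
    !![r, 0; 0, ε * r] * J₂ * !![r, 0; 0, ε * r]ᵀ = !![0, -(ε * r ^ 2); ε * r ^ 2, 0] := by
  ext i j; fin_cases i <;> fin_cases j <;> simp [J₂, mul_apply, Fin.sum_univ_two] <;> ring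

lemma IsPivotBlock.det_ne_zero {D : Matrix (Fin 2) (Fin 2) ℝ} (hD : IsPivotBlock D) :
    D.det ≠ 0 := by
  obtain ⟨r, hr, ε, hε, rfl⟩ := hD
  rw [det_fin_two_of]
  rcases hε with rfl | rfl <;> simp [hr.ne']

lemma IsPivotBlock.eq_of_mul_J₂_mul_transpose_eq {D D' : Matrix (Fin 2) (Fin 2) ℝ}
    (hD : IsPivotBlock D) (hD' : IsPivotBlock D') (h : D * J₂ * Dᵀ = D' * J₂ * D'ᵀ) :
    D = D' := by
  obtain ⟨r, hr, ε, hε, rfl⟩ := hD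
  obtain ⟨r', hr', ε', hε', rfl⟩ := hD'
  rw [pivot_mul_J₂_mul_transpose, pivot_mul_J₂_mul_transpose] at h
  have h₁₀ : ε * r ^ 2 = ε' * r' ^ 2 := by simpa using congrFun (congrFun h 1) 0
  obtain ⟨rfl, rfl⟩ : r = r' ∧ ε = ε' := by
    rcases hε with rfl | rfl <;> rcases hε' with rfl | rfl
    · exact ⟨by nlinarith, rfl⟩
    · nlinarith
    · nlinarith
    · exact ⟨by nlinarith, rfl⟩
  rfl

lemma exists_isPivotBlock {S : Matrix (Fin 2) (Fin 2) ℝ} (hS : Sᵀ = -S) (hdet : S.det ≠ 0) :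
    ∃ D, IsPivotBlock D ∧ S = D * J₂ * Dᵀ := by
  have hskew (i j) : S j i = -S i j := congrFun (congrFun hS i) j
  set a := S 1 0
  have hS_eq : S = !![0, -a; a, 0] := by
    rw [eta_fin_two S, hskew 1 0]
    congr <;> linarith [hskew 0 0, hskew 1 1]
  have ha : a ≠ 0 := by rintro h; simp [hS_eq, h] at hdet
  refine ⟨_, ⟨√|a|, by positivity, SignType.sign a, ?_, rfl⟩, ?_⟩
  · rcases lt_or_gt_of_ne ha with h | h <;> simp [h]
  · rw [pivot_mul_J₂_mul_transpose, Real.sq_sqrt (abs_nonneg a), sign_mul_abs, hS_eq]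

lemma fromBlocks_zero₁₂_mul_mul_transpose {R m n : Type*} [CommRing R] [Fintype m] [Fintype n]
    (B₁ : Matrix m m R) (C : Matrix n m R) (D : Matrix n n R) (J : Matrix m m R)
    (K : Matrix n n R) :
    fromBlocks B₁ 0 C D * fromBlocks J 0 0 K * (fromBlocks B₁ 0 C D)ᵀ =
      fromBlocks (B₁ * J * B₁ᵀ) (B₁ * J * Cᵀ) (C * J * B₁ᵀ) (C * J * Cᵀ + D * K * Dᵀ) := by
  simp [fromBlocks_transpose, fromBlocks_multiply, Matrix.mul_assoc]

section BlockStep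

variable {m : Type*} [Fintype m] [DecidableEq m] {J B₁ : Matrix m m ℝ}

lemma exists_fromBlocks_mul_mul_transpose_eq (hJ : Jᵀ = -J) (hJdet : J.det ≠ 0)
    (hB₁ : B₁.det ≠ 0) {A₁₂ : Matrix m (Fin 2) ℝ} {A₂₁ : Matrix (Fin 2) m ℝ}
    {A₂₂ : Matrix (Fin 2) (Fin 2) ℝ} (hA : (fromBlocks (B₁ * J * B₁ᵀ) A₁₂ A₂₁ A₂₂)ᵀ =
      -fromBlocks (B₁ * J * B₁ᵀ) A₁₂ A₂₁ A₂₂)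
    (hAdet : (fromBlocks (B₁ * J * B₁ᵀ) A₁₂ A₂₁ A₂₂).det ≠ 0) :
    ∃ C D, IsPivotBlock D ∧ fromBlocks (B₁ * J * B₁ᵀ) A₁₂ A₂₁ A₂₂ =
      fromBlocks B₁ 0 C D * fromBlocks J 0 0 J₂ * (fromBlocks B₁ 0 C D)ᵀ := by
  rw [fromBlocks_transpose, fromBlocks_neg, fromBlocks_inj] at hA
  obtain ⟨-, hA₁₂, -, hA₂₂⟩ := hA
  have hJB₁ : IsUnit (J * B₁ᵀ).det := by simp [hJdet, hB₁]
  set C := A₂₁ * (J * B₁ᵀ)⁻¹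
  have hC : C * J * B₁ᵀ = A₂₁ := by
    simp only [C, Matrix.mul_assoc, nonsing_inv_mul _ hJB₁, Matrix.mul_one]
  have hA₁₂' : B₁ * J * Cᵀ = A₁₂ := by
    have h := congrArg transpose hC
    rw [transpose_mul, transpose_mul, transpose_transpose, hJ, hA₁₂] at h
    simpa [Matrix.mul_assoc] using h
  set S := A₂₂ - C * J * Cᵀ
  have hfac : fromBlocks (B₁ * J * B₁ᵀ) A₁₂ A₂₁ A₂₂ =
      fromBlocks B₁ 0 C 1 * fromBlocks J 0 0 S * (fromBlocks B₁ 0 C 1)ᵀ := by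
    rw [fromBlocks_zero₁₂_mul_mul_transpose, hC, hA₁₂']
    simp [S]
  have hS : Sᵀ = -S := by
    simp only [S, transpose_sub, transpose_mul, transpose_transpose, hA₂₂, hJ]
    simp only [Matrix.neg_mul, Matrix.mul_neg, Matrix.mul_assoc]
    abel
  have hSdet : S.det ≠ 0 := fun h0 ↦ hAdet (by simp [hfac, h0])
  obtain ⟨D, hD, hSD⟩ := exists_isPivotBlock hS hSdet
  refine ⟨C, D, hD, ?_⟩
  rw [fromBlocks_zero₁₂_mul_mul_transpose, hC, hA₁₂', ← hSD]
  simp [S]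

lemma eq_of_fromBlocks_mul_mul_transpose_eq (hJdet : J.det ≠ 0) (hB₁ : B₁.det ≠ 0)
    {C C' : Matrix (Fin 2) m ℝ} {D D' : Matrix (Fin 2) (Fin 2) ℝ} (hD : IsPivotBlock D)
    (hD' : IsPivotBlock D')
    (h : fromBlocks B₁ 0 C D * fromBlocks J 0 0 J₂ * (fromBlocks B₁ 0 C D)ᵀ =
      fromBlocks B₁ 0 C' D' * fromBlocks J 0 0 J₂ * (fromBlocks B₁ 0 C' D')ᵀ) :
    C = C' ∧ D = D' := by
  rw [fromBlocks_zero₁₂_mul_mul_transpose, fromBlocks_zero₁₂_mul_mul_transpose,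
    fromBlocks_inj] at h
  obtain ⟨-, -, h₂₁, h₂₂⟩ := h
  have hJB₁ : IsUnit (J * B₁ᵀ).det := by simp [hJdet, hB₁]
  obtain rfl : C = C' := by
    rw [Matrix.mul_assoc, Matrix.mul_assoc] at h₂₁
    exact mul_left_injective_of_inv _ _ (mul_nonsing_inv _ hJB₁) h₂₁
  exact ⟨rfl, hD.eq_of_mul_J₂_mul_transpose_eq hD' (add_left_cancel h₂₂)⟩

end BlockStep

def splitLastPair (ℓ : ℕ) : Fin (2 * ℓ) ⊕ Fin 2 ≃ Fin (2 * (ℓ + 1)) :=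
  finSumFinEquiv.trans (finCongr (by ring))

@[simp] lemma splitLastPair_inl (ℓ : ℕ) (i : Fin (2 * ℓ)) :
    (splitLastPair ℓ (.inl i) : ℕ) = i := by
  simp only [splitLastPair, Equiv.trans_apply, finCongr_apply, Fin.val_cast,
    finSumFinEquiv_apply_left, Fin.val_castAdd]

@[simp] lemma splitLastPair_inr (ℓ : ℕ) (j : Fin 2) :
    (splitLastPair ℓ (.inr j) : ℕ) = 2 * ℓ + j := by
  simp only [splitLastPair, Equiv.trans_apply, finCongr_apply, Fin.val_cast,
    finSumFinEquiv_apply_right, Fin.val_natAdd]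

lemma skewJ_transpose (ℓ : ℕ) : (skewJ ℓ)ᵀ = -skewJ ℓ := by
  ext i j
  simp only [skewJ, transpose_apply, Matrix.neg_apply, of_apply]
  split_ifs <;> first | lia | norm_num

lemma skewJ_succ (ℓ : ℕ) :
    skewJ (ℓ + 1) = reindex (splitLastPair ℓ) (splitLastPair ℓ) (fromBlocks (skewJ ℓ) 0 0 J₂) := by
  ext i j
  obtain ⟨s, rfl⟩ := (splitLastPair ℓ).surjective i
  obtain ⟨t, rfl⟩ := (splitLastPair ℓ).surjective j
  simp only [reindex_apply, submatrix_apply, Equiv.symm_apply_apply]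
  rcases s with i | i <;> rcases t with j | j
  · simp only [skewJ, of_apply, splitLastPair_inl, fromBlocks_apply₁₁]
  · simp only [skewJ, of_apply, splitLastPair_inl, splitLastPair_inr, fromBlocks_apply₁₂,
      Matrix.zero_apply]
    rw [if_neg (by lia)]
  · simp only [skewJ, of_apply, splitLastPair_inl, splitLastPair_inr, fromBlocks_apply₂₁,
      Matrix.zero_apply]
    rw [if_neg (by lia)]
  · fin_cases i <;> fin_cases j <;> simp [skewJ, J₂] <;> lia

lemma det_skewJ (ℓ : ℕ) : (skewJ ℓ).det = 1 := by
  induction ℓ with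
  | zero => simp [det_isEmpty]
  | succ ℓ ih => simp [skewJ_succ, ih, J₂]

lemma reindex_splitLastPair_mul_skewJ_mul_transpose {ℓ : ℕ}
    (M : Matrix (Fin (2 * ℓ) ⊕ Fin 2) (Fin (2 * ℓ) ⊕ Fin 2) ℝ) :
    reindex (splitLastPair ℓ) (splitLastPair ℓ) M * skewJ (ℓ + 1) *
        (reindex (splitLastPair ℓ) (splitLastPair ℓ) M)ᵀ =
      reindex (splitLastPair ℓ) (splitLastPair ℓ) (M * fromBlocks (skewJ ℓ) 0 0 J₂ * Mᵀ) := by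
  simp only [skewJ_succ, reindex_apply, transpose_submatrix, submatrix_mul_equiv]

def IsPairLowerTriangular {R : Type*} [Zero R] {n : ℕ} (B : Matrix (Fin n) (Fin n) R) : Prop :=
  ∀ i j : Fin n, (i : ℕ) / 2 < (j : ℕ) / 2 → B i j = 0

def HasPivotBlocks (ℓ : ℕ) (B : Matrix (Fin (2 * ℓ)) (Fin (2 * ℓ)) ℝ) : Prop :=
  ∀ k : ℕ, ∀ hk : k < ℓ, ∃ r : ℝ, 0 < r ∧ ∃ ε : ℝ, (ε = 1 ∨ ε = -1) ∧
    B ⟨2 * k, by lia⟩ ⟨2 * k, by lia⟩ = r ∧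
    B ⟨2 * k, by lia⟩ ⟨2 * k + 1, by lia⟩ = 0 ∧
    B ⟨2 * k + 1, by lia⟩ ⟨2 * k, by lia⟩ = 0 ∧
    B ⟨2 * k + 1, by lia⟩ ⟨2 * k + 1, by lia⟩ = ε * r

def IsSkewCholeskyShape (ℓ : ℕ) (B : Matrix (Fin (2 * ℓ)) (Fin (2 * ℓ)) ℝ) : Prop :=
  IsPairLowerTriangular B ∧ HasPivotBlocks ℓ B

lemma isPairLowerTriangular_reindex_splitLastPair_iff {ℓ : ℕ}
    (M : Matrix (Fin (2 * ℓ) ⊕ Fin 2) (Fin (2 * ℓ) ⊕ Fin 2) ℝ) :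
    IsPairLowerTriangular (reindex (splitLastPair ℓ) (splitLastPair ℓ) M) ↔
      M.toBlocks₁₂ = 0 ∧ IsPairLowerTriangular M.toBlocks₁₁ := by
  simp only [IsPairLowerTriangular, ← (splitLastPair ℓ).forall_congr_right, Sum.forall,
    reindex_apply, submatrix_apply, Equiv.symm_apply_apply, splitLastPair_inl, splitLastPair_inr]
  have hlast (b : Fin 2) : (2 * ℓ + b) / 2 = ℓ := by lia
  have hfirst (a : Fin (2 * ℓ)) : (a : ℕ) / 2 < ℓ := by lia
  simp only [hlast, hfirst, (Nat.lt_asymm <| hfirst _), lt_self_iff_false, IsEmpty.forall_iff,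
    implies_true, forall_const, and_true, ← Matrix.ext_iff, toBlocks₁₂, toBlocks₁₁, of_apply,
    Matrix.zero_apply, forall_and]
  tauto

lemma hasPivotBlocks_reindex_splitLastPair_iff {ℓ : ℕ}
    (M : Matrix (Fin (2 * ℓ) ⊕ Fin 2) (Fin (2 * ℓ) ⊕ Fin 2) ℝ) :
    HasPivotBlocks (ℓ + 1) (reindex (splitLastPair ℓ) (splitLastPair ℓ) M) ↔
      HasPivotBlocks ℓ M.toBlocks₁₁ ∧ IsPivotBlock M.toBlocks₂₂ := by
  set e := splitLastPair ℓ
  have h_inl (i : ℕ) (hi : i < 2 * ℓ) :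
      (⟨i, by lia⟩ : Fin (2 * (ℓ + 1))) = e (.inl ⟨i, hi⟩) := Fin.ext (by simp [e])
  have h_inr₀ : (⟨2 * ℓ, by lia⟩ : Fin (2 * (ℓ + 1))) = e (.inr 0) := Fin.ext (by simp [e])
  have h_inr₁ : (⟨2 * ℓ + 1, by lia⟩ : Fin (2 * (ℓ + 1))) = e (.inr 1) := Fin.ext (by simp [e])
  have h_pivot : IsPivotBlock M.toBlocks₂₂ ↔ ∃ r : ℝ, 0 < r ∧ ∃ ε : ℝ, (ε = 1 ∨ ε = -1) ∧
      M (.inr 0) (.inr 0) = r ∧ M (.inr 0) (.inr 1) = 0 ∧ M (.inr 1) (.inr 0) = 0 ∧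
      M (.inr 1) (.inr 1) = ε * r := by
    refine exists_congr fun r ↦ and_congr_right fun _ ↦ exists_congr fun ε ↦
      and_congr_right fun _ ↦ ?_
    rw [← Matrix.ext_iff]
    simp [Fin.forall_fin_two, toBlocks₂₂, and_assoc]
  rw [h_pivot]
  constructor
  · intro h
    refine ⟨fun k hk ↦ ?_, ?_⟩
    · obtain ⟨r, hr, ε, hε, h⟩ := h k (by lia)
      simp only [h_inl (2 * k) (by lia), h_inl (2 * k + 1) (by lia), reindex_apply,
        submatrix_apply, Equiv.symm_apply_apply] at h
      exact ⟨r, hr, ε, hε, h⟩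
    · obtain ⟨r, hr, ε, hε, h⟩ := h ℓ (by lia)
      simp only [h_inr₀, h_inr₁, reindex_apply, submatrix_apply, Equiv.symm_apply_apply] at h
      exact ⟨r, hr, ε, hε, h⟩
  · rintro ⟨h₁, h₂⟩ k hk
    rcases Nat.lt_succ_iff_lt_or_eq.mp hk with hk | rfl
    · simp only [h_inl (2 * k) (by lia), h_inl (2 * k + 1) (by lia), reindex_apply,
        submatrix_apply, Equiv.symm_apply_apply]
      exact h₁ k hk
    · simp only [h_inr₀, h_inr₁, reindex_apply, submatrix_apply, Equiv.symm_apply_apply]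
      exact h₂

lemma isSkewCholeskyShape_reindex_fromBlocks_iff {ℓ : ℕ} (B₁ : Matrix (Fin (2 * ℓ)) (Fin (2 * ℓ)) ℝ)
    (B₁₂ : Matrix (Fin (2 * ℓ)) (Fin 2) ℝ) (C : Matrix (Fin 2) (Fin (2 * ℓ)) ℝ)
    (D : Matrix (Fin 2) (Fin 2) ℝ) :
    IsSkewCholeskyShape (ℓ + 1)
        (reindex (splitLastPair ℓ) (splitLastPair ℓ) (fromBlocks B₁ B₁₂ C D)) ↔
      B₁₂ = 0 ∧ IsSkewCholeskyShape ℓ B₁ ∧ IsPivotBlock D := by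
  rw [IsSkewCholeskyShape, isPairLowerTriangular_reindex_splitLastPair_iff,
    hasPivotBlocks_reindex_splitLastPair_iff]
  simp only [toBlocks_fromBlocks₁₁, toBlocks_fromBlocks₁₂, toBlocks_fromBlocks₂₂,
    IsSkewCholeskyShape]
  tauto

lemma IsSkewCholeskyShape.exists_eq_reindex_fromBlocks {ℓ : ℕ}
    {B : Matrix (Fin (2 * (ℓ + 1))) (Fin (2 * (ℓ + 1))) ℝ} (hB : IsSkewCholeskyShape (ℓ + 1) B) :
    ∃ B₁ C D, IsSkewCholeskyShape ℓ B₁ ∧ IsPivotBlock D ∧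
      B = reindex (splitLastPair ℓ) (splitLastPair ℓ) (fromBlocks B₁ 0 C D) := by
  set M := (reindex (splitLastPair ℓ) (splitLastPair ℓ)).symm B
  have hBM : B = reindex (splitLastPair ℓ) (splitLastPair ℓ)
      (fromBlocks M.toBlocks₁₁ M.toBlocks₁₂ M.toBlocks₂₁ M.toBlocks₂₂) := by
    simp [M, fromBlocks_toBlocks]
  rw [hBM, isSkewCholeskyShape_reindex_fromBlocks_iff] at hB
  obtain ⟨h₁₂, hB₁, hD⟩ := hB
  exact ⟨_, _, _, hB₁, hD, h₁₂ ▸ hBM⟩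

lemma IsSkewCholeskyShape.det_ne_zero {ℓ : ℕ} {B : Matrix (Fin (2 * ℓ)) (Fin (2 * ℓ)) ℝ}
    (hB : IsSkewCholeskyShape ℓ B) : B.det ≠ 0 := by
  induction ℓ with
  | zero => simp [det_isEmpty]
  | succ ℓ ih =>
    obtain ⟨B₁, C, D, hB₁, hD, rfl⟩ := hB.exists_eq_reindex_fromBlocks
    rw [det_reindex_self, det_fromBlocks_zero₁₂]
    exact mul_ne_zero (ih hB₁) hD.det_ne_zero

theorem IsSkewCholeskyShape.eq_of_mul_skewJ_mul_transpose_eq {ℓ : ℕ}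
    {B B' : Matrix (Fin (2 * ℓ)) (Fin (2 * ℓ)) ℝ} (hB : IsSkewCholeskyShape ℓ B)
    (hB' : IsSkewCholeskyShape ℓ B') (h : B * skewJ ℓ * Bᵀ = B' * skewJ ℓ * B'ᵀ) : B = B' := by
  induction ℓ with
  | zero => ext i; exact i.elim0
  | succ ℓ ih =>
    obtain ⟨B₁, C, D, hB₁, hD, rfl⟩ := hB.exists_eq_reindex_fromBlocks
    obtain ⟨B₁', C', D', hB₁', hD', rfl⟩ := hB'.exists_eq_reindex_fromBlocks
    rw [reindex_splitLastPair_mul_skewJ_mul_transpose,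
      reindex_splitLastPair_mul_skewJ_mul_transpose, (reindex _ _).injective.eq_iff] at h
    obtain rfl : B₁ = B₁' := ih hB₁ hB₁' <| by
      simpa [fromBlocks_zero₁₂_mul_mul_transpose] using congrArg toBlocks₁₁ h
    obtain ⟨rfl, rfl⟩ :=
      eq_of_fromBlocks_mul_mul_transpose_eq (by simp [det_skewJ]) hB₁.det_ne_zero hD hD' h
    rfl

theorem exists_skewCholesky (ℓ : ℕ) (A : Matrix (Fin (2 * ℓ)) (Fin (2 * ℓ)) ℝ)
    (hA : Aᵀ = -A) (hdet : ∀ k : ℕ, 1 ≤ k → ∀ hk : 2 * k ≤ 2 * ℓ,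
      (A.submatrix (Fin.castLE hk) (Fin.castLE hk)).det ≠ 0) :
    ∃ B, IsSkewCholeskyShape ℓ B ∧ A = B * skewJ ℓ * Bᵀ := by
  induction ℓ with
  | zero =>
    exact ⟨A, ⟨fun i ↦ i.elim0, fun k hk ↦ absurd hk k.not_lt_zero⟩, by ext i; exact i.elim0⟩
  | succ ℓ ih =>
    set A' := A.submatrix (splitLastPair ℓ) (splitLastPair ℓ)
    have hA₁₁ : A'.toBlocks₁₁ = A.submatrix (Fin.castLE (by lia)) (Fin.castLE (by lia)) := rfl
    obtain ⟨B₁, hB₁, hB₁A⟩ := ih A'.toBlocks₁₁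
      (by rw [hA₁₁, transpose_submatrix, hA]; rfl) (fun k hk₁ hk ↦ hdet k hk₁ (by lia))
    have hA' : A'ᵀ = -A' := by rw [transpose_submatrix, hA]; rfl
    have hA'det : A'.det ≠ 0 := by
      simpa [A', det_submatrix_equiv_self] using hdet (ℓ + 1) (by lia) le_rfl
    rw [← fromBlocks_toBlocks A', hB₁A] at hA' hA'det
    obtain ⟨C, D, hD, hfac⟩ := exists_fromBlocks_mul_mul_transpose_eq (skewJ_transpose ℓ)
      (by simp [det_skewJ]) hB₁.det_ne_zero hA' hA'det
    refine ⟨reindex (splitLastPair ℓ) (splitLastPair ℓ) (fromBlocks B₁ 0 C D),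
      (isSkewCholeskyShape_reindex_fromBlocks_iff _ _ _ _).mpr ⟨rfl, hB₁, hD⟩, ?_⟩
    rw [reindex_splitLastPair_mul_skewJ_mul_transpose, ← hfac, ← hB₁A, fromBlocks_toBlocks]
    simp [A']

/-- **Skew-symmetric Cholesky factorization.** If `A` is a real skew-symmetric
`2ℓ × 2ℓ` matrix with `det (A^(2k)) ≠ 0` for `k = 1, …, ℓ`, then there is a unique
lower block triangular matrix `B` (w.r.t. consecutive pairs of indices) whose `k`-th
diagonal `2 × 2` block has the form `[[r, 0], [0, ± r]]` with `r > 0`, such that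
`A = B * J * Bᵀ`. -/
theorem skew_cholesky_factorization_real (ℓ : ℕ)
    (A : Matrix (Fin (2 * ℓ)) (Fin (2 * ℓ)) ℝ) (hskew : Aᵀ = -A)
    (hdet : ∀ k : ℕ, 1 ≤ k → ∀ hk : 2 * k ≤ 2 * ℓ,
      (A.submatrix (Fin.castLE hk) (Fin.castLE hk)).det ≠ 0) :
    ∃! B : Matrix (Fin (2 * ℓ)) (Fin (2 * ℓ)) ℝ,
      (∀ i j : Fin (2 * ℓ), (i : ℕ) / 2 < (j : ℕ) / 2 → B i j = 0) ∧
      (∀ k : ℕ, ∀ hk : k < ℓ, ∃ r : ℝ, 0 < r ∧ ∃ ε : ℝ, (ε = 1 ∨ ε = -1) ∧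
        B ⟨2 * k, by omega⟩ ⟨2 * k, by omega⟩ = r ∧
        B ⟨2 * k, by omega⟩ ⟨2 * k + 1, by omega⟩ = 0 ∧
        B ⟨2 * k + 1, by omega⟩ ⟨2 * k, by omega⟩ = 0 ∧
        B ⟨2 * k + 1, by omega⟩ ⟨2 * k + 1, by omega⟩ = ε * r) ∧
      A = B * skewJ ℓ * Bᵀ := by
  obtain ⟨B, hB, hAB⟩ := exists_skewCholesky ℓ A hskew hdet
  refine ⟨B, ⟨hB.1, hB.2, hAB⟩, fun B' ⟨hB'₁, hB'₂, hAB'⟩ ↦ ?_⟩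
  exact IsSkewCholeskyShape.eq_of_mul_skewJ_mul_transpose_eq ⟨hB'₁, hB'₂⟩ hB (hAB' ▸ hAB)
end

section
/- Let m ≥ 2 and let A be a complex m×m matrix with det(A^{(k)}) ≠ 0 for k = 1, …, m and det(Â^{(k)}) ≠ 0 for k = 1, …, m-1, where Â is the m×(m-1) matrix obtained from A by deleting its first column. Let K be the m×m matrix with K i i = 1 for all i, K i (i+1) = 1 for all i < m-1, and all other entries 0. Then there exist a unique complex lower triangular m×m matrix B and a unique complex upper triangular m×m matrix C whose (0,0) entry equals 1 and whose remaining first-row entries are 0, such that A = B · K · C. -/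
/-!
With `U = K * C`, the decomposition `A = B * K * C` is an LU decomposition `A = B * U`
normalised by `v ᵥ* U = e₀`, where `v = ((-1) ^ i)ᵢ` satisfies `v ᵥ* K = e₀`, so that
`v ᵥ* U` is the first row of `C`.

Such a normalised LU decomposition is built by bordering. Given `A' = B' * U'` for the leading
`(n + 1) × (n + 1)` block of an `(n + 2) × (n + 2)` matrix `A`, the new column of `U` is `B'⁻¹ a`
(`a` the new column of `A`) followed by the diagonal entry `δ` forced by the normalisation; the
new row of `B` is then determined provided `δ ≠ 0`. If `δ = 0`, the first `n + 1` entries of `v`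
form a nonzero left null vector of the block of `U` with rows `0, …, n` and columns `1, …, n + 1`,
and `B'` times this block is the hat block of `A` of size `n + 1`.

Two LU decompositions of an invertible matrix differ by a matrix that is both lower and upper
triangular, i.e. diagonal, and the normalisation `v D = v` with all `vᵢ ≠ 0` forces `D = 1`.
-/

open Matrix

/-- The `m × m` matrix `K` with `1`'s on the diagonal and on the superdiagonal, and
zeros elsewhere. -/
def modK (m : ℕ) : Matrix (Fin m) (Fin m) ℂ :=
  Matrix.of fun i j => if (j : ℕ) = (i : ℕ) ∨ (j : ℕ) = (i : ℕ) + 1 then 1 else 0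

namespace Matrix

variable {R : Type*} {n : ℕ}

/-- The matrix `[[M, c], [r, d]]`. -/
def border (M : Matrix (Fin n) (Fin n) R) (c r : Fin n → R) (d : R) :
    Matrix (Fin (n + 1)) (Fin (n + 1)) R :=
  of fun i j => Fin.lastCases (Fin.lastCases d r j) (fun i => Fin.lastCases (c i) (M i) j) i

section border

variable (M : Matrix (Fin n) (Fin n) R) (c r : Fin n → R) (d : R)

@[simp] theorem border_castSucc_castSucc (i j : Fin n) :
    border M c r d i.castSucc j.castSucc = M i j := by simp [border]

@[simp] theorem border_castSucc_last (i : Fin n) :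
    border M c r d i.castSucc (Fin.last n) = c i := by simp [border]

@[simp] theorem border_last_castSucc (j : Fin n) :
    border M c r d (Fin.last n) j.castSucc = r j := by simp [border]

@[simp] theorem border_last_last : border M c r d (Fin.last n) (Fin.last n) = d := by
  simp [border]

theorem border_mul_border [CommSemiring R]
    (M' : Matrix (Fin n) (Fin n) R) (c' r' : Fin n → R) (d' : R) :
    border M c r d * border M' c' r' d' =
      border (M * M' + vecMulVec c r') (M *ᵥ c' + d' • c) (r ᵥ* M' + d • r')
        (r ⬝ᵥ c' + d * d') := by
  ext i j
  induction i using Fin.lastCases <;> induction j using Fin.lastCases <;>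
    simp [mul_apply, Fin.sum_univ_castSucc, mulVec, vecMul, dotProduct, vecMulVec_apply,
      mul_comm]

theorem snoc_vecMul_border [NonUnitalNonAssocSemiring R] (v : Fin n → R) (t : R) :
    Fin.snoc v t ᵥ* border M c r d = Fin.snoc (v ᵥ* M + t • r) (v ⬝ᵥ c + t * d) := by
  ext j
  induction j using Fin.lastCases <;> simp [vecMul, dotProduct, Fin.sum_univ_castSucc]

end border

theorem eq_border (A : Matrix (Fin (n + 1)) (Fin (n + 1)) R) :
    A = border (A.submatrix Fin.castSucc Fin.castSucc) (fun i => A i.castSucc (Fin.last n))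
      (fun j => A (Fin.last n) j.castSucc) (A (Fin.last n) (Fin.last n)) := by
  ext i j
  induction i using Fin.lastCases <;> induction j using Fin.lastCases <;> simp

theorem isUpperTriangular_border [Zero R] {M : Matrix (Fin n) (Fin n) R}
    (hM : M.IsUpperTriangular) (c : Fin n → R) (d : R) : (border M c 0 d).IsUpperTriangular := by
  intro i j hij
  induction i using Fin.lastCases <;> induction j using Fin.lastCases
  · exact absurd hij (lt_irrefl _)
  · simp
  · exact absurd hij (Fin.castSucc_lt_last _).not_gt
  · simpa using hM (Fin.castSucc_lt_castSucc_iff.mp hij)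

theorem isLowerTriangular_border [Zero R] {M : Matrix (Fin n) (Fin n) R}
    (hM : M.IsLowerTriangular) (r : Fin n → R) (d : R) : (border M 0 r d).IsLowerTriangular := by
  intro i j hij
  induction i using Fin.lastCases <;> induction j using Fin.lastCases
  · exact absurd hij (lt_irrefl _)
  · exact absurd hij (Fin.castSucc_lt_last _).not_gt
  · simp
  · simpa using hM (Fin.castSucc_lt_castSucc_iff.mp hij)

theorem vecMul_mul_eq_single_iff {ι : Type*} [Fintype ι] [DecidableEq ι] [Semiring R]
    {v : ι → R} {M : Matrix ι ι R} {i : ι} (hvM : v ᵥ* M = Pi.single i 1) (C : Matrix ι ι R) :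
    v ᵥ* (M * C) = Pi.single i 1 ↔ C i i = 1 ∧ ∀ j, j ≠ i → C i j = 0 := by
  rw [← vecMul_vecMul, hvM, single_one_vecMul, funext_iff]
  refine ⟨fun h => ⟨by simpa using h i, fun j hj => by simpa [hj] using h j⟩, fun h j => ?_⟩
  by_cases hj : j = i
  · subst hj
    simpa using h.1
  · simpa [hj] using h.2 j hj

variable {K : Type*} [Field K]

theorem IsUpperTriangular.isUpperTriangular_mul_iff {ι : Type*} [Fintype ι] [DecidableEq ι]
    [LinearOrder ι] {M N : Matrix ι ι K} (hM : M.IsUpperTriangular) (hdet : IsUnit M.det) :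
    (M * N).IsUpperTriangular ↔ N.IsUpperTriangular := by
  have := M.invertibleOfIsUnitDet hdet
  refine ⟨fun h => ?_, hM.mul⟩
  rw [← inv_mul_cancel_left_of_invertible M N]
  exact (blockTriangular_inv_of_blockTriangular hM).mul h

theorem lu_unique_of_vecMul_eq {ι : Type*} [Fintype ι] [DecidableEq ι] [LinearOrder ι]
    {B₁ B₂ U₁ U₂ : Matrix ι ι K} {v : ι → K} (hv : ∀ i, v i ≠ 0)
    (hB₁ : B₁.IsLowerTriangular) (hB₂ : B₂.IsLowerTriangular)
    (hU₁ : U₁.IsUpperTriangular) (hU₂ : U₂.IsUpperTriangular)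
    (hB₂det : IsUnit B₂.det) (hU₁det : IsUnit U₁.det)
    (h : B₁ * U₁ = B₂ * U₂) (hvU : v ᵥ* U₁ = v ᵥ* U₂) : B₁ = B₂ ∧ U₁ = U₂ := by
  have := B₂.invertibleOfIsUnitDet hB₂det
  have := U₁.invertibleOfIsUnitDet hU₁det
  set D := B₂⁻¹ * B₁
  have hDU : D * U₁ = U₂ := by
    rw [Matrix.mul_assoc, h, ← Matrix.mul_assoc, nonsing_inv_mul _ hB₂det, Matrix.one_mul]
  have hBD : B₂ * D = B₁ := by
    rw [← Matrix.mul_assoc, mul_nonsing_inv _ hB₂det, Matrix.one_mul]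
  have hD_lower : D.IsLowerTriangular := (blockTriangular_inv_of_blockTriangular hB₂).mul hB₁
  have hD_upper : D.IsUpperTriangular := by
    rw [show D = U₂ * U₁⁻¹ by rw [← hDU, mul_nonsing_inv_cancel_right _ _ hU₁det]]
    exact hU₂.mul (blockTriangular_inv_of_blockTriangular hU₁)
  have hD : diagonal D.diag = D := (isDiag_iff_diagonal_diag D).mp fun i j hij =>
    hij.lt_or_gt.elim (fun h => hD_lower h) (fun h => hD_upper h)
  have hvD : v ᵥ* D = v :=
    vecMul_injective_of_isUnit ((isUnit_iff_isUnit_det U₁).mpr hU₁det)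
      (by simp only [vecMul_vecMul, hDU, hvU])
  have hD_one : D = 1 := by
    rw [← hD, ← diagonal_one]
    congr 1
    ext i
    have hi := congr_fun hvD i
    rw [← hD, vecMul_diagonal] at hi
    simpa [hv i] using hi
  exact ⟨by rw [← hBD, hD_one, Matrix.mul_one], by rw [← hDU, hD_one, Matrix.one_mul]⟩

variable {n : ℕ}

theorem det_submatrix_castSucc_succ_eq_zero {A : Matrix (Fin (n + 2)) (Fin (n + 2)) K}
    {B U : Matrix (Fin (n + 1)) (Fin (n + 1)) K} {v y : Fin (n + 1) → K}
    (hA : A.submatrix Fin.castSucc Fin.castSucc = B * U)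
    (hy : B *ᵥ y = fun i => A i.castSucc (Fin.last _))
    (hv : v ᵥ* U = Pi.single 0 1) (hvy : v ⬝ᵥ y = 0) :
    (A.submatrix Fin.castSucc Fin.succ).det = 0 := by
  let W : Matrix (Fin (n + 1)) (Fin (n + 1)) K :=
    of fun i j => Fin.lastCases (y i) (fun j => U i j.succ) j
  have hW : A.submatrix Fin.castSucc Fin.succ = B * W := by
    ext i j
    induction j using Fin.lastCases with
    | last => simpa [W, mulVec, dotProduct, mul_apply] using (congr_fun hy i).symm
    | cast j =>
      have hij := congr_fun₂ hA i j.succ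
      simp only [submatrix_apply, W, mul_apply, of_apply, Fin.lastCases_castSucc] at hij ⊢
      rw [← hij, Fin.succ_castSucc]
  have hvW : v ᵥ* W = 0 := by
    ext j
    induction j using Fin.lastCases with
    | last => simpa [W, vecMul, dotProduct] using hvy
    | cast j => simpa [W, vecMul, dotProduct, Fin.succ_ne_zero] using congr_fun hv j.succ
  have hv_ne : v ≠ 0 := by
    rintro rfl
    have h := congr_fun hv 0
    rw [zero_vecMul, Pi.single_eq_same] at h
    exact zero_ne_one h
  rw [hW, det_mul, exists_vecMul_eq_zero_iff.mp ⟨v, hv_ne, hvW⟩, mul_zero]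

theorem exists_lu_of_submatrix_castSucc_eq {A : Matrix (Fin (n + 2)) (Fin (n + 2)) K}
    {v : Fin (n + 2) → K} (hv : v (Fin.last _) ≠ 0)
    {B' U' : Matrix (Fin (n + 1)) (Fin (n + 1)) K}
    (hB' : B'.IsLowerTriangular) (hU' : U'.IsUpperTriangular)
    (hB'det : IsUnit B'.det) (hU'det : IsUnit U'.det) (hvU' : Fin.init v ᵥ* U' = Pi.single 0 1)
    (hA' : A.submatrix Fin.castSucc Fin.castSucc = B' * U')
    (hhat : (A.submatrix Fin.castSucc Fin.succ).det ≠ 0) :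
    ∃ B U : Matrix (Fin (n + 2)) (Fin (n + 2)) K, B.IsLowerTriangular ∧ U.IsUpperTriangular ∧
      v ᵥ* U = Pi.single 0 1 ∧ A = B * U := by
  set y := B'⁻¹ *ᵥ fun i => A i.castSucc (Fin.last _)
  set x := (fun j => A (Fin.last _) j.castSucc) ᵥ* U'⁻¹
  set δ := -(Fin.init v ⬝ᵥ y) / v (Fin.last _)
  have hy : B' *ᵥ y = fun i => A i.castSucc (Fin.last _) := by
    rw [mulVec_mulVec, mul_nonsing_inv _ hB'det, one_mulVec]
  have hx : x ᵥ* U' = fun j => A (Fin.last _) j.castSucc := by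
    rw [vecMul_vecMul, nonsing_inv_mul _ hU'det, vecMul_one]
  have hδ : δ ≠ 0 := by
    intro hδ
    refine hhat (det_submatrix_castSucc_succ_eq_zero hA' hy hvU' ?_)
    simpa [δ, hv] using hδ
  refine ⟨border B' 0 x ((A (Fin.last _) (Fin.last _) - x ⬝ᵥ y) / δ), border U' y 0 δ,
    isLowerTriangular_border hB' _ _, isUpperTriangular_border hU' _ _, ?_, ?_⟩
  · rw [← Fin.snoc_init_self v, snoc_vecMul_border]
    ext j
    induction j using Fin.lastCases with
    | last =>
      rw [Fin.snoc_last, Pi.single_eq_of_ne (Fin.last_pos'.ne' : Fin.last (n + 1) ≠ 0),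
        mul_div_cancel₀ _ hv, add_neg_cancel]
    | cast j => simp [hvU', Pi.single_apply]
  · rw [border_mul_border]
    conv_lhs => rw [eq_border A]
    congr 1 <;> simp [hA', hy, hx, hδ]

theorem exists_lu_vecMul_eq_single (A : Matrix (Fin (n + 1)) (Fin (n + 1)) K)
    (v : Fin (n + 1) → K) (hv : ∀ i, v i ≠ 0)
    (hlead : ∀ k, 1 ≤ k → ∀ hk : k ≤ n,
      (A.submatrix (Fin.castLE (hk.trans n.le_succ)) (Fin.castLE (hk.trans n.le_succ))).det ≠ 0)
    (hhat : ∀ k, 1 ≤ k → ∀ hk : k ≤ n,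
      (A.submatrix (Fin.castLE (hk.trans n.le_succ))
        (Fin.castLE (Nat.succ_le_succ hk) ∘ Fin.succ)).det ≠ 0) :
    ∃ B U : Matrix (Fin (n + 1)) (Fin (n + 1)) K, B.IsLowerTriangular ∧ U.IsUpperTriangular ∧
      v ᵥ* U = Pi.single 0 1 ∧ A = B * U := by
  induction n with
  | zero =>
    refine ⟨v 0 • A, (v 0)⁻¹ • 1, fun i j h => absurd h (by simp [Fin.fin_one_eq_zero i]),
      fun i j h => absurd h (by simp [Fin.fin_one_eq_zero i]), ?_, ?_⟩
    · ext j
      rw [Fin.fin_one_eq_zero j, vecMul_smul, vecMul_one]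
      simp [hv 0]
    · rw [smul_mul_smul_comm, mul_inv_cancel₀ (hv 0), one_smul, mul_one]
  | succ n ih =>
    obtain ⟨B', U', hB', hU', hvU', hA'⟩ :=
      ih (A.submatrix Fin.castSucc Fin.castSucc) (Fin.init v) (fun i => hv _)
        (fun k hk₁ hk => hlead k hk₁ (hk.trans n.le_succ))
        (fun k hk₁ hk => hhat k hk₁ (hk.trans n.le_succ))
    have hdet : IsUnit (B' * U').det := by
      rw [← hA']
      exact (hlead (n + 1) n.succ_pos le_rfl).isUnit
    rw [det_mul] at hdet
    exact exists_lu_of_submatrix_castSucc_eq (hv _) hB' hU' (isUnit_of_mul_isUnit_left hdet)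
      (isUnit_of_mul_isUnit_right hdet) hvU' hA' (hhat (n + 1) n.succ_pos le_rfl)

theorem existsUnique_lu_vecMul_eq_single (A : Matrix (Fin (n + 1)) (Fin (n + 1)) K)
    (v : Fin (n + 1) → K) (hv : ∀ i, v i ≠ 0) (hA : A.det ≠ 0)
    (hlead : ∀ k, 1 ≤ k → ∀ hk : k ≤ n,
      (A.submatrix (Fin.castLE (hk.trans n.le_succ)) (Fin.castLE (hk.trans n.le_succ))).det ≠ 0)
    (hhat : ∀ k, 1 ≤ k → ∀ hk : k ≤ n,
      (A.submatrix (Fin.castLE (hk.trans n.le_succ))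
        (Fin.castLE (Nat.succ_le_succ hk) ∘ Fin.succ)).det ≠ 0) :
    ∃! BU : Matrix (Fin (n + 1)) (Fin (n + 1)) K × Matrix (Fin (n + 1)) (Fin (n + 1)) K,
      BU.1.IsLowerTriangular ∧ BU.2.IsUpperTriangular ∧ v ᵥ* BU.2 = Pi.single 0 1 ∧
        A = BU.1 * BU.2 := by
  obtain ⟨B, U, hB, hU, hvU, rfl⟩ := exists_lu_vecMul_eq_single A v hv hlead hhat
  refine ⟨(B, U), ⟨hB, hU, hvU, rfl⟩, ?_⟩
  rintro ⟨B₂, U₂⟩ ⟨hB₂, hU₂, hvU₂, hA₂⟩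
  have hBdet : IsUnit B.det := (left_ne_zero_of_mul (det_mul B U ▸ hA)).isUnit
  have hU₂det : IsUnit U₂.det := (right_ne_zero_of_mul (det_mul B₂ U₂ ▸ hA₂ ▸ hA)).isUnit
  obtain ⟨rfl, rfl⟩ :=
    lu_unique_of_vecMul_eq hv hB₂ hB hU₂ hU hBdet hU₂det hA₂.symm (hvU₂.trans hvU.symm)
  rfl

end Matrix

theorem isUpperTriangular_modK (m : ℕ) : (modK m).IsUpperTriangular := by
  intro i j hij
  have : (j : ℕ) < i := hij
  simp only [modK, of_apply]
  rw [if_neg (by omega)]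

theorem det_modK (m : ℕ) : (modK m).det = 1 := by
  rw [det_of_isUpperTriangular (isUpperTriangular_modK m)]
  simp [modK]

theorem vecMul_modK_zero {n : ℕ} (w : Fin (n + 1) → ℂ) : (w ᵥ* modK (n + 1)) 0 = w 0 := by
  simp [modK, vecMul, dotProduct, Fin.sum_univ_succ]

theorem vecMul_modK_succ {n : ℕ} (w : Fin (n + 1) → ℂ) (j : Fin n) :
    (w ᵥ* modK (n + 1)) j.succ = w j.succ + w j.castSucc := by
  rw [vecMul, dotProduct,
    Finset.sum_eq_add j.succ j.castSucc (Fin.castSucc_lt_succ (i := j)).ne']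
  · simp [modK]
  · intro i _ hi
    have h₁ : (j : ℕ) + 1 ≠ i := fun h => hi.1 (Fin.ext h.symm)
    have h₂ : (j : ℕ) ≠ i := fun h => hi.2 (Fin.ext h.symm)
    simp [modK, h₁, h₂]
  all_goals simp

theorem alternating_vecMul_modK (n : ℕ) :
    (fun i : Fin (n + 1) => (-1 : ℂ) ^ (i : ℕ)) ᵥ* modK (n + 1) = Pi.single 0 1 := by
  ext j
  cases j using Fin.cases with
  | zero => simp [vecMul_modK_zero]
  | succ j => simp [vecMul_modK_succ, pow_succ, Fin.succ_ne_zero]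

/-- **Modified LU decomposition.** If `A` is a complex `m × m` matrix with
`det (A^(k)) ≠ 0` for `k = 1, …, m` and `det (Â^(k)) ≠ 0` for `k = 1, …, m - 1`
(where `Â` deletes the first column of `A`), then there are a unique lower triangular
`B` and a unique upper triangular `C`, with `C 0 0 = 1` and remaining first-row
entries `0`, such that `A = B * K * C`. -/
theorem modified_lu_decomposition (m : ℕ) (hm : 2 ≤ m)
    (A : Matrix (Fin m) (Fin m) ℂ)
    (hdet : ∀ k : ℕ, 1 ≤ k → ∀ hk : k ≤ m,
      (A.submatrix (Fin.castLE hk) (Fin.castLE hk)).det ≠ 0)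
    (hdet' : ∀ k : ℕ, 1 ≤ k → ∀ hk : k ≤ m - 1,
      (Matrix.of fun a b : Fin k =>
        A (Fin.castLE (by omega) a) ⟨(b : ℕ) + 1, by have := b.isLt; omega⟩).det ≠ 0) :
    ∃! BC : Matrix (Fin m) (Fin m) ℂ × Matrix (Fin m) (Fin m) ℂ,
      (∀ i j : Fin m, i < j → BC.1 i j = 0) ∧
      (∀ i j : Fin m, j < i → BC.2 i j = 0) ∧
      BC.2 ⟨0, by omega⟩ ⟨0, by omega⟩ = 1 ∧
      (∀ j : Fin m, j ≠ ⟨0, by omega⟩ → BC.2 ⟨0, by omega⟩ j = 0) ∧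
      A = BC.1 * modK m * BC.2 := by
  obtain ⟨n, rfl⟩ : ∃ n, m = n + 1 := ⟨m - 1, by omega⟩
  have hKdet : IsUnit (modK (n + 1)).det := by simp [det_modK]
  have hLU :=
    existsUnique_lu_vecMul_eq_single A (fun i => (-1 : ℂ) ^ (i : ℕ)) (fun i => by simp)
      (hdet (n + 1) n.succ_pos le_rfl) (fun k hk₁ hk => hdet k hk₁ (hk.trans n.le_succ)) hdet'
  have hK : IsUnit (modK (n + 1)) := (isUnit_iff_isUnit_det _).mpr hKdet
  refine ((Equiv.prodCongr (Equiv.refl _) hK.unit.mulLeft).existsUnique_congr ?_).mpr hLU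
  rintro ⟨B, C⟩
  simp only [Equiv.prodCongr_apply, Prod.map, Equiv.coe_refl, id, Units.mulLeft_apply,
    IsUnit.unit_spec, Matrix.mul_assoc]
  rw [(isUpperTriangular_modK _).isUpperTriangular_mul_iff hKdet,
    vecMul_mul_eq_single_iff (alternating_vecMul_modK n), and_assoc]
  rfl
end

section
/- Let m ≥ 1. The space of complex symmetric m×m matrices A with det(A^{(k)}) ≠ 0 for all k = 1, …, m (with the subspace topology from the space of m×m complex matrices) is homotopy equivalent to the m-torus (S¹)^m. -/
/-!
Let `A` be symmetric with nonzero leading minors `d₀ = 1, d₁, …, d_m`. Gaussian elimination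
without row exchanges gives a unit lower triangular `M`, depending continuously on `A` (its rows
come from adjugates of the leading blocks), with `M A Mᵀ = diag(p₀, …, p_{m-1})` for the pivots
`p_k = d_{k+1} / d_k`. Congruence by a unit lower triangular matrix preserves all leading minors,
so the matrices `Mₜ⁻¹ Dₜ Mₜ⁻ᵀ`, with `Mₜ` running linearly from `M` to `1` and each pivot of `Dₜ`
moving radially onto the unit circle, never leave the space. This deforms the identity into
`A ↦ diag(p_k / |p_k|)`, which factors through the torus; conversely, a diagonal matrix with
unimodular entries has these entries as its pivots.
-/

open Matrix

variable {m : ℕ}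

section RadialScale

variable {E : Type*} [NormedAddCommGroup E] [NormedSpace ℝ E]

noncomputable def radialScale (t : ℝ) (z : E) : E := (1 - t + t * ‖z‖⁻¹) • z

theorem radialScale_zero (z : E) : radialScale 0 z = z := by
  simp [radialScale]

theorem radialScale_one (z : E) : radialScale 1 z = ‖z‖⁻¹ • z := by
  simp [radialScale]

theorem radialScale_ne_zero {t : ℝ} (ht : t ∈ unitInterval) {z : E} (hz : z ≠ 0) :
    radialScale t z ≠ 0 := by
  have hpos : 0 < 1 - t + t * ‖z‖⁻¹ := by
    rcases ht.2.lt_or_eq with ht1 | rfl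
    · nlinarith [ht.1, inv_nonneg.2 (norm_nonneg z)]
    · simpa using hz
  exact smul_ne_zero hpos.ne' hz

theorem Continuous.radialScale {X : Type*} [TopologicalSpace X] {f : X → ℝ} {g : X → E}
    (hf : Continuous f) (hg : Continuous g) (hg₀ : ∀ x, g x ≠ 0) :
    Continuous fun x => radialScale (f x) (g x) :=
  ((continuous_const.sub hf).add
    (hf.mul (hg.norm.inv₀ fun x => norm_ne_zero_iff.2 (hg₀ x)))).smul hg

end RadialScale

namespace Matrix

section LeadingMinor

variable {R : Type*} [CommRing R]

def leadingMinor (A : Matrix (Fin m) (Fin m) R) (k : ℕ) (hk : k ≤ m) : R :=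
  (A.submatrix (Fin.castLE hk) (Fin.castLE hk)).det

theorem forall_leadingMinor_ne_zero_iff [Nontrivial R]
    {A : Matrix (Fin m) (Fin m) R} :
    (∀ k hk, leadingMinor A k hk ≠ 0) ↔
      ∀ k, 1 ≤ k → ∀ hk : k ≤ m, (A.submatrix (Fin.castLE hk) (Fin.castLE hk)).det ≠ 0 := by
  refine ⟨fun h k _ hk => h k hk, fun h k hk => ?_⟩
  rcases k with _ | k
  · simp [leadingMinor]
  · exact h _ k.succ_pos hk

theorem det_eq_one_of_isLowerTriangular {n : Type*} [Fintype n] [LinearOrder n]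
    {L : Matrix n n R} (hL : L.IsLowerTriangular) (hL₁ : ∀ i, L i i = 1) : L.det = 1 := by
  rw [det_of_isLowerTriangular L hL]
  exact Finset.prod_eq_one fun i _ => hL₁ i

theorem IsLowerTriangular.apply_eq_zero_of_lt {n : Type*} [LT n] {L : Matrix n n R}
    (hL : L.IsLowerTriangular) {i j : n} (h : i < j) : L i j = 0 :=
  hL h

theorem IsLowerTriangular.submatrix_castLE {L : Matrix (Fin m) (Fin m) R}
    (hL : L.IsLowerTriangular) {k : ℕ} (hk : k ≤ m) :
    (L.submatrix (Fin.castLE hk) (Fin.castLE hk)).IsLowerTriangular :=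
  fun _ _ h => hL.apply_eq_zero_of_lt h

theorem submatrix_castLE_mul_of_isLowerTriangular {L : Matrix (Fin m) (Fin m) R}
    (hL : L.IsLowerTriangular) (B : Matrix (Fin m) (Fin m) R) {k : ℕ} (hk : k ≤ m) :
    (L * B).submatrix (Fin.castLE hk) (Fin.castLE hk) =
      L.submatrix (Fin.castLE hk) (Fin.castLE hk) *
        B.submatrix (Fin.castLE hk) (Fin.castLE hk) := by
  ext i j
  simp only [submatrix_apply, mul_apply]
  refine (Fintype.sum_of_injective _ (Fin.castLE_injective hk) _ _ (fun l hl => ?_)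
    fun l => rfl).symm
  have hkl : k ≤ l := by
    by_contra h
    exact hl ⟨⟨l, by omega⟩, rfl⟩
  rw [hL.apply_eq_zero_of_lt (Fin.lt_def.2 (i.isLt.trans_le hkl) : Fin.castLE hk i < l), zero_mul]

theorem leadingMinor_mul_of_isLowerTriangular {L : Matrix (Fin m) (Fin m) R}
    (hL : L.IsLowerTriangular) (hL₁ : ∀ i, L i i = 1) (B : Matrix (Fin m) (Fin m) R)
    (k : ℕ) (hk : k ≤ m) : leadingMinor (L * B) k hk = leadingMinor B k hk := by
  rw [leadingMinor, submatrix_castLE_mul_of_isLowerTriangular hL, det_mul,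
    det_eq_one_of_isLowerTriangular (hL.submatrix_castLE hk) fun i => hL₁ _,
    one_mul, leadingMinor]

theorem leadingMinor_transpose (A : Matrix (Fin m) (Fin m) R) (k : ℕ) (hk : k ≤ m) :
    leadingMinor Aᵀ k hk = leadingMinor A k hk := by
  rw [leadingMinor, ← transpose_submatrix, det_transpose, leadingMinor]

theorem leadingMinor_mul_mul_transpose {L : Matrix (Fin m) (Fin m) R}
    (hL : L.IsLowerTriangular) (hL₁ : ∀ i, L i i = 1) (X : Matrix (Fin m) (Fin m) R)
    (k : ℕ) (hk : k ≤ m) : leadingMinor (L * X * Lᵀ) k hk = leadingMinor X k hk := by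
  rw [Matrix.mul_assoc, leadingMinor_mul_of_isLowerTriangular hL hL₁, ← leadingMinor_transpose,
    transpose_mul, transpose_transpose, leadingMinor_mul_of_isLowerTriangular hL hL₁,
    leadingMinor_transpose]

theorem leadingMinor_diagonal (d : Fin m → R) (k : ℕ) (hk : k ≤ m) :
    leadingMinor (diagonal d) k hk = ∏ i : Fin k, d (Fin.castLE hk i) := by
  rw [leadingMinor, submatrix_diagonal _ _ (Fin.castLE_injective hk), det_diagonal,
    Function.comp_def]

end LeadingMinor

section LDL

variable {K : Type*} [Field K] {A : Matrix (Fin m) (Fin m) K}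

noncomputable def pivot (A : Matrix (Fin m) (Fin m) K) (k : Fin m) : K :=
  leadingMinor A (k + 1) k.isLt / leadingMinor A k k.isLt.le

theorem pivot_ne_zero (hA : ∀ k hk, leadingMinor A k hk ≠ 0) (k : Fin m) : pivot A k ≠ 0 :=
  div_ne_zero (hA _ _) (hA _ _)

theorem pivot_diagonal {d : Fin m → K} (hd : ∀ i, d i ≠ 0) (k : Fin m) :
    pivot (diagonal d) k = d k := by
  rw [pivot, leadingMinor_diagonal, leadingMinor_diagonal, Fin.prod_univ_castSucc]
  exact mul_div_cancel_left₀ (d k) (Finset.prod_ne_zero_iff.2 fun i _ => hd _)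

/-- Row `k` is the last row of `adjugate A^{(k+1)}`, scaled so that its diagonal entry
`det A^{(k)}` becomes `1`; by Cramer's rule `ldlLowerInv A * A` is then upper triangular with the
pivots on its diagonal. -/
noncomputable def ldlLowerInv (A : Matrix (Fin m) (Fin m) K) : Matrix (Fin m) (Fin m) K :=
  of fun k l => if h : l ≤ k then
    adjugate (A.submatrix (Fin.castLE k.isLt) (Fin.castLE k.isLt)) (Fin.last k)
      ⟨l, Nat.lt_succ_of_le h⟩ / leadingMinor A k k.isLt.le
  else 0

theorem ldlLowerInv_isLowerTriangular (A : Matrix (Fin m) (Fin m) K) :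
    (ldlLowerInv A).IsLowerTriangular := fun k l h => by
  simp [ldlLowerInv, not_le.2 (show k < l from h)]

theorem ldlLowerInv_apply_self (hA : ∀ k hk, leadingMinor A k hk ≠ 0) (k : Fin m) :
    ldlLowerInv A k k = 1 := by
  have hlast : (⟨k, Nat.lt_succ_self k⟩ : Fin (k + 1)) = Fin.last k := rfl
  rw [ldlLowerInv, of_apply, dif_pos le_rfl, hlast, adjugate_fin_succ_eq_det_submatrix,
    Fin.succAbove_last, submatrix_submatrix]
  simp only [Fin.val_last, ← two_mul, pow_mul, neg_one_sq, one_pow, one_mul]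
  exact div_self (hA k k.isLt.le)

theorem ldlLowerInv_mul_apply_of_le {k j : Fin m} (hjk : j ≤ k) :
    (ldlLowerInv A * A) k j = if j = k then pivot A k else 0 := by
  set B := A.submatrix (Fin.castLE k.isLt) (Fin.castLE k.isLt)
  have hrow : (ldlLowerInv A * A) k j =
      (adjugate B * B) (Fin.last k) ⟨j, Nat.lt_succ_of_le hjk⟩ / leadingMinor A k k.isLt.le := by
    rw [mul_apply, mul_apply, Finset.sum_div]
    refine (Fintype.sum_of_injective _ (Fin.castLE_injective k.isLt) _ _ (fun l hl => ?_)
      fun l => ?_).symm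
    · have hkl : k < l := by
        by_contra h
        exact hl ⟨⟨l, by omega⟩, rfl⟩
      rw [(ldlLowerInv_isLowerTriangular A).apply_eq_zero_of_lt hkl, zero_mul]
    · rw [ldlLowerInv, of_apply, dif_pos (Fin.le_def.2 (Nat.le_of_lt_succ l.isLt)),
        div_mul_eq_mul_div]
      rfl
  rw [hrow, adjugate_mul, smul_apply, one_apply, smul_eq_mul]
  simp only [Fin.ext_iff, Fin.val_last]
  rcases (Fin.le_def.1 hjk).eq_or_lt with hjk | hjk
  · rw [if_pos hjk.symm, if_pos hjk, mul_one]
    rfl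
  · rw [if_neg hjk.ne', if_neg hjk.ne, mul_zero, zero_div]

theorem ldlLowerInv_mul_mul_transpose (hsymm : Aᵀ = A) (hA : ∀ k hk, leadingMinor A k hk ≠ 0) :
    ldlLowerInv A * A * (ldlLowerInv A)ᵀ = diagonal (pivot A) := by
  have hM := ldlLowerInv_isLowerTriangular A
  have lower : ∀ i j, j ≤ i →
      (ldlLowerInv A * A * (ldlLowerInv A)ᵀ) i j = diagonal (pivot A) i j := by
    intro i j hji
    rw [mul_apply, Finset.sum_eq_single i, ldlLowerInv_mul_apply_of_le le_rfl, if_pos rfl,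
      transpose_apply]
    · rcases hji.eq_or_lt with rfl | hlt
      · rw [ldlLowerInv_apply_self hA, mul_one, diagonal_apply_eq]
      · rw [hM.apply_eq_zero_of_lt hlt, mul_zero, diagonal_apply_ne _ hlt.ne']
    · intro l _ hli
      rcases le_or_gt l i with hle | hlt
      · rw [ldlLowerInv_mul_apply_of_le hle, if_neg hli, zero_mul]
      · rw [transpose_apply, hM.apply_eq_zero_of_lt (hji.trans_lt hlt), mul_zero]
    · simp
  have hsymm' :
      (ldlLowerInv A * A * (ldlLowerInv A)ᵀ)ᵀ = ldlLowerInv A * A * (ldlLowerInv A)ᵀ := by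
    rw [transpose_mul, transpose_mul, transpose_transpose, hsymm, Matrix.mul_assoc]
  ext i j
  rcases le_total j i with hji | hij
  · exact lower i j hji
  · rw [← hsymm', transpose_apply, lower j i hij]
    exact congrFun₂ (diagonal_transpose _) i j

theorem det_ldlLowerInv (hA : ∀ k hk, leadingMinor A k hk ≠ 0) : (ldlLowerInv A).det = 1 :=
  det_eq_one_of_isLowerTriangular (ldlLowerInv_isLowerTriangular A) (ldlLowerInv_apply_self hA)

noncomputable def ldlLowerInvPath (c : K) (A : Matrix (Fin m) (Fin m) K) :
    Matrix (Fin m) (Fin m) K :=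
  ldlLowerInv A + c • (1 - ldlLowerInv A)

theorem ldlLowerInvPath_isLowerTriangular (c : K) (A : Matrix (Fin m) (Fin m) K) :
    (ldlLowerInvPath c A).IsLowerTriangular := fun i j h => by
  have hij : i < j := h
  simp [ldlLowerInvPath, (ldlLowerInv_isLowerTriangular A).apply_eq_zero_of_lt hij,
    one_apply_ne hij.ne]

theorem ldlLowerInvPath_apply_self (hA : ∀ k hk, leadingMinor A k hk ≠ 0) (c : K) (i : Fin m) :
    ldlLowerInvPath c A i i = 1 := by
  simp [ldlLowerInvPath, ldlLowerInv_apply_self hA]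

theorem det_ldlLowerInvPath (hA : ∀ k hk, leadingMinor A k hk ≠ 0) (c : K) :
    (ldlLowerInvPath c A).det = 1 :=
  det_eq_one_of_isLowerTriangular (ldlLowerInvPath_isLowerTriangular c A)
    (ldlLowerInvPath_apply_self hA c)

theorem ldlLowerInvPath_zero (A : Matrix (Fin m) (Fin m) K) :
    ldlLowerInvPath 0 A = ldlLowerInv A := by
  simp [ldlLowerInvPath]

theorem ldlLowerInvPath_one (A : Matrix (Fin m) (Fin m) K) : ldlLowerInvPath 1 A = 1 := by
  simp [ldlLowerInvPath]

end LDL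

section Congruence

variable {n R : Type*} [Fintype n] [DecidableEq n] [CommRing R] {P : Matrix n n R}

theorem nonsing_inv_mul_mul_transpose_cancel (hP : IsUnit P.det) (X : Matrix n n R) :
    P⁻¹ * (P * X * Pᵀ) * P⁻¹ᵀ = X := by
  rw [transpose_nonsing_inv, ← Matrix.mul_assoc P⁻¹,
    mul_nonsing_inv_cancel_right _ _ (isUnit_det_transpose _ hP),
    nonsing_inv_mul_cancel_left _ _ hP]

theorem mul_nonsing_inv_mul_transpose_cancel (hP : IsUnit P.det) (X : Matrix n n R) :
    P * (P⁻¹ * X * P⁻¹ᵀ) * Pᵀ = X := by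
  rw [transpose_nonsing_inv, ← Matrix.mul_assoc P,
    nonsing_inv_mul_cancel_right _ _ (isUnit_det_transpose _ hP),
    mul_nonsing_inv_cancel_left _ _ hP]

end Congruence

section Continuity

variable {K X : Type*} [Field K] [TopologicalSpace K] [IsTopologicalDivisionRing K]
  [TopologicalSpace X] {f : X → Matrix (Fin m) (Fin m) K}

theorem _root_.Continuous.leadingMinor (hf : Continuous f) (k : ℕ) (hk : k ≤ m) :
    Continuous fun x => (f x).leadingMinor k hk :=
  (hf.matrix_submatrix _ _).matrix_det

theorem _root_.Continuous.pivot (hf : Continuous f) (hA : ∀ x k hk, (f x).leadingMinor k hk ≠ 0)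
    (k : Fin m) : Continuous fun x => pivot (f x) k :=
  (hf.leadingMinor _ _).div (hf.leadingMinor _ _) fun x => hA x _ _

theorem _root_.Continuous.ldlLowerInv (hf : Continuous f)
    (hA : ∀ x k hk, (f x).leadingMinor k hk ≠ 0) :
    Continuous fun x => ldlLowerInv (f x) := by
  refine continuous_matrix fun k l => ?_
  by_cases h : l ≤ k
  · simp only [Matrix.ldlLowerInv, of_apply, dif_pos h]
    exact ((hf.matrix_submatrix _ _).matrix_adjugate.matrix_elem _ _).div
      (hf.leadingMinor _ _) fun x => hA x _ _
  · simp only [Matrix.ldlLowerInv, of_apply, dif_neg h]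
    exact continuous_const

end Continuity

section Deformation

variable {𝕜 : Type*} [RCLike 𝕜] {A : Matrix (Fin m) (Fin m) 𝕜}

noncomputable def ldlDeformation (t : ℝ) (A : Matrix (Fin m) (Fin m) 𝕜) :
    Matrix (Fin m) (Fin m) 𝕜 :=
  (ldlLowerInvPath (t : 𝕜) A)⁻¹ * diagonal (fun k => radialScale t (pivot A k)) *
    (ldlLowerInvPath (t : 𝕜) A)⁻¹ᵀ

theorem ldlDeformation_transpose (t : ℝ) (A : Matrix (Fin m) (Fin m) 𝕜) :
    (ldlDeformation t A)ᵀ = ldlDeformation t A := by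
  rw [ldlDeformation, transpose_mul, transpose_mul, transpose_transpose, diagonal_transpose,
    Matrix.mul_assoc]

theorem leadingMinor_ldlDeformation (hA : ∀ k hk, leadingMinor A k hk ≠ 0) (t : ℝ) (k : ℕ)
    (hk : k ≤ m) :
    leadingMinor (ldlDeformation t A) k hk =
      ∏ i : Fin k, radialScale t (pivot A (Fin.castLE hk i)) := by
  have hP := ldlLowerInvPath_isLowerTriangular (t : 𝕜) A
  rw [← leadingMinor_mul_mul_transpose hP (ldlLowerInvPath_apply_self hA _), ldlDeformation,
    mul_nonsing_inv_mul_transpose_cancel (det_ldlLowerInvPath hA _ ▸ isUnit_one),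
    leadingMinor_diagonal]

theorem ldlDeformation_zero (hsymm : Aᵀ = A) (hA : ∀ k hk, leadingMinor A k hk ≠ 0) :
    ldlDeformation 0 A = A := by
  simp only [ldlDeformation, RCLike.ofReal_zero, ldlLowerInvPath_zero, radialScale_zero]
  rw [← ldlLowerInv_mul_mul_transpose hsymm hA,
    nonsing_inv_mul_mul_transpose_cancel (det_ldlLowerInv hA ▸ isUnit_one)]

theorem ldlDeformation_one (A : Matrix (Fin m) (Fin m) 𝕜) :
    ldlDeformation 1 A = diagonal fun k => ‖pivot A k‖⁻¹ • pivot A k := by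
  simp [ldlDeformation, ldlLowerInvPath_one, radialScale_one]

theorem _root_.Continuous.ldlDeformation {X : Type*} [TopologicalSpace X] {f : X → ℝ}
    {g : X → Matrix (Fin m) (Fin m) 𝕜} (hf : Continuous f) (hg : Continuous g)
    (hA : ∀ x k hk, (g x).leadingMinor k hk ≠ 0) :
    Continuous fun x => ldlDeformation (f x) (g x) := by
  have hP : Continuous fun x => ldlLowerInvPath (f x : 𝕜) (g x) := by
    have := hg.ldlLowerInv hA
    unfold ldlLowerInvPath
    fun_prop
  have hPinv : Continuous fun x => (ldlLowerInvPath (f x : 𝕜) (g x))⁻¹ := by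
    refine hP.matrix_adjugate.congr fun x => ?_
    rw [inv_def, det_ldlLowerInvPath (hA x), Ring.inverse_one, one_smul]
  exact (hPinv.matrix_mul (continuous_pi fun k =>
    hf.radialScale (hg.pivot hA k) fun x => pivot_ne_zero (hA x) k).matrix_diagonal).matrix_mul
    hPinv.matrix_transpose

end Deformation

def symmetricLeadingNonsingular (K : Type*) [Field K] (m : ℕ) : Set (Matrix (Fin m) (Fin m) K) :=
  {A | Aᵀ = A ∧ ∀ k hk, leadingMinor A k hk ≠ 0}

namespace symmetricLeadingNonsingular

open Metric ContinuousMap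

variable {𝕜 : Type*} [RCLike 𝕜]

noncomputable def toTorus : C(symmetricLeadingNonsingular 𝕜 m, Fin m → sphere (0 : 𝕜) 1) where
  toFun A k := ⟨‖pivot A.1 k‖⁻¹ • pivot A.1 k,
    mem_sphere_zero_iff_norm.2 (norm_smul_inv_norm (pivot_ne_zero A.2.2 k))⟩
  continuous_toFun := by
    have hp := continuous_subtype_val.pivot fun A : symmetricLeadingNonsingular 𝕜 m => A.2.2
    exact continuous_pi fun k => (((hp k).norm.inv₀ fun A =>
      norm_ne_zero_iff.2 (pivot_ne_zero A.2.2 k)).smul (hp k)).subtype_mk _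

noncomputable def ofTorus : C(Fin m → sphere (0 : 𝕜) 1, symmetricLeadingNonsingular 𝕜 m) where
  toFun z := ⟨diagonal fun k => (z k : 𝕜), diagonal_transpose _, fun k hk => by
    rw [leadingMinor_diagonal]
    exact Finset.prod_ne_zero_iff.2 fun i _ => ne_zero_of_mem_unit_sphere _⟩
  continuous_toFun :=
    (continuous_pi fun k => continuous_subtype_val.comp (continuous_apply k)).matrix_diagonal
      |>.subtype_mk _

theorem toTorus_comp_ofTorus :
    toTorus.comp ofTorus = ContinuousMap.id (Fin m → sphere (0 : 𝕜) 1) := by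
  ext z k
  simp [toTorus, ofTorus, pivot_diagonal fun i => ne_zero_of_mem_unit_sphere (z i)]

noncomputable def ldlHomotopy :
    (ContinuousMap.id (symmetricLeadingNonsingular 𝕜 m)).Homotopy (ofTorus.comp toTorus) where
  toFun p := ⟨ldlDeformation p.1 p.2.1, ldlDeformation_transpose _ _, fun k hk => by
    rw [leadingMinor_ldlDeformation p.2.2.2]
    exact Finset.prod_ne_zero_iff.2 fun i _ => radialScale_ne_zero p.1.2 (pivot_ne_zero p.2.2.2 _)⟩
  continuous_toFun := (Continuous.ldlDeformation (continuous_subtype_val.comp continuous_fst)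
    (continuous_subtype_val.comp continuous_snd) fun p => p.2.2.2).subtype_mk _
  map_zero_left A := Subtype.ext (ldlDeformation_zero A.2.1 A.2.2)
  map_one_left A := Subtype.ext (ldlDeformation_one A.1)

noncomputable def homotopyEquivTorus :
    symmetricLeadingNonsingular 𝕜 m ≃ₕ (Fin m → sphere (0 : 𝕜) 1) where
  toFun := toTorus
  invFun := ofTorus
  left_inv := ⟨ldlHomotopy.symm⟩
  right_inv := by rw [toTorus_comp_ofTorus]

end symmetricLeadingNonsingular

end Matrix

theorem symmetric_cholesky_complement_homotopy_torus_general (m : ℕ) :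
    Nonempty (ContinuousMap.HomotopyEquiv
      {A : Matrix (Fin m) (Fin m) ℂ // Aᵀ = A ∧ ∀ k : ℕ, 1 ≤ k → ∀ hk : k ≤ m,
        (A.submatrix (Fin.castLE hk) (Fin.castLE hk)).det ≠ 0}
      (Fin m → Metric.sphere (0 : ℂ) 1)) :=
  ⟨((Homeomorph.refl (Matrix (Fin m) (Fin m) ℂ)).subtype fun _ =>
    and_congr_right' forall_leadingMinor_ne_zero_iff.symm)
    |>.toHomotopyEquiv.trans symmetricLeadingNonsingular.homotopyEquivTorus⟩

/-- The space of complex symmetric `m × m` matrices all of whose leading principal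
minors are nonzero is homotopy equivalent to the `m`-torus `(S¹)^m`. -/
theorem symmetric_cholesky_complement_homotopy_torus (m : ℕ) (hm : 1 ≤ m) :
    Nonempty (ContinuousMap.HomotopyEquiv
      {A : Matrix (Fin m) (Fin m) ℂ // Aᵀ = A ∧ ∀ k : ℕ, 1 ≤ k → ∀ hk : k ≤ m,
        (A.submatrix (Fin.castLE hk) (Fin.castLE hk)).det ≠ 0}
      (Fin m → Metric.sphere (0 : ℂ) 1)) :=
  symmetric_cholesky_complement_homotopy_torus_general m
end

section
/- Let m ≥ 1. The space of complex m×m matrices A with det(A^{(k)}) ≠ 0 for all k = 1, …, m (with the subspace topology from the space of m×m complex matrices) is homotopy equivalent to the m-torus (S¹)^m. -/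
/-!
Write `A = [[B, u], [vᵀ, d]]` with `B` its leading `m × m` block. The leading minors of `A` are
those of `B` together with `det A = det B · (d - vᵀ B⁻¹ u)`, so `A ↦ (B, d - vᵀ B⁻¹ u, u, v)`
is a homeomorphism from the matrices of size `m + 1` with nonzero leading minors onto
`X_m × ℂˣ × ℂᵐ × ℂᵐ`, where `X_m` is the corresponding space of size `m`. The factors `ℂᵐ` are
contractible and `ℂˣ` deformation retracts onto `S¹`, so by induction `X_m ≃ₕ (S¹)ᵐ`.
-/

open Matrix ContinuousMap Set

namespace Matrix

variable {R : Type*} {m : ℕ}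

def LeadingMinorsNeZero [CommRing R] (A : Matrix (Fin m) (Fin m) R) : Prop :=
  ∀ k : ℕ, 1 ≤ k → ∀ hk : k ≤ m, (A.submatrix (Fin.castLE hk) (Fin.castLE hk)).det ≠ 0

theorem leadingMinorsNeZero_of_fin_zero [CommRing R] (A : Matrix (Fin 0) (Fin 0) R) :
    A.LeadingMinorsNeZero :=
  fun _ hk1 hk => absurd (hk1.trans hk) (by norm_num)

theorem LeadingMinorsNeZero.det_ne_zero [CommRing R] [Nontrivial R]
    {A : Matrix (Fin m) (Fin m) R} (hA : A.LeadingMinorsNeZero) : A.det ≠ 0 := by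
  rcases Nat.eq_zero_or_pos m with rfl | hm
  · simp
  · simpa using hA m hm le_rfl

theorem leadingMinorsNeZero_succ_iff [CommRing R] (A : Matrix (Fin (m + 1)) (Fin (m + 1)) R) :
    A.LeadingMinorsNeZero ↔
      (A.submatrix Fin.castSucc Fin.castSucc).LeadingMinorsNeZero ∧ A.det ≠ 0 := by
  have minor_eq (k : ℕ) (hk : k ≤ m) :
      (A.submatrix Fin.castSucc Fin.castSucc).submatrix (Fin.castLE hk) (Fin.castLE hk) =
        A.submatrix (Fin.castLE (hk.trans m.le_succ)) (Fin.castLE (hk.trans m.le_succ)) := by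
    rw [submatrix_submatrix]; rfl
  refine ⟨fun hA => ⟨fun k hk1 hk => ?_, by simpa using hA (m + 1) m.succ_pos le_rfl⟩,
    fun ⟨hB, hdet⟩ k hk1 hk => ?_⟩
  · rw [minor_eq k hk]
    exact hA k hk1 _
  · rcases hk.lt_or_eq with hk | rfl
    · rw [← minor_eq k (Nat.lt_succ_iff.mp hk)]
      exact hB k hk1 _
    · simpa using hdet

/-- The block matrix `[[B, u], [vᵀ, d]]`. -/
def borderLast [Zero R] (B : Matrix (Fin m) (Fin m) R) (u v : Fin m → R) (d : R) :
    Matrix (Fin (m + 1)) (Fin (m + 1)) R :=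
  (fromBlocks B (replicateCol (Fin 1) u) (replicateRow (Fin 1) v) (of fun _ _ => d)).submatrix
    finSumFinEquiv.symm finSumFinEquiv.symm

section borderLast

variable [Zero R] (B : Matrix (Fin m) (Fin m) R) (u v : Fin m → R) (d : R)

@[simp]
theorem borderLast_castSucc_castSucc (i j : Fin m) :
    borderLast B u v d i.castSucc j.castSucc = B i j := by
  simp [borderLast]

@[simp]
theorem borderLast_castSucc_last (i : Fin m) :
    borderLast B u v d i.castSucc (Fin.last m) = u i := by
  simp [borderLast]

@[simp]
theorem borderLast_last_castSucc (j : Fin m) :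
    borderLast B u v d (Fin.last m) j.castSucc = v j := by
  simp [borderLast]

@[simp]
theorem borderLast_last_last : borderLast B u v d (Fin.last m) (Fin.last m) = d := by
  simp [borderLast]

@[simp]
theorem submatrix_castSucc_borderLast :
    (borderLast B u v d).submatrix Fin.castSucc Fin.castSucc = B := by
  ext i j
  simp

end borderLast

theorem borderLast_eta [Zero R] (A : Matrix (Fin (m + 1)) (Fin (m + 1)) R) :
    borderLast (A.submatrix Fin.castSucc Fin.castSucc) (fun i => A i.castSucc (Fin.last m))
      (fun j => A (Fin.last m) j.castSucc) (A (Fin.last m) (Fin.last m)) = A := by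
  ext i j
  induction i using Fin.lastCases <;> induction j using Fin.lastCases <;> simp

theorem det_borderLast [CommRing R] (B : Matrix (Fin m) (Fin m) R) (u v : Fin m → R) (d : R)
    (hB : IsUnit B.det) :
    (borderLast B u v d).det = B.det * (d - v ⬝ᵥ B⁻¹ *ᵥ u) := by
  have := B.invertibleOfIsUnitDet hB
  rw [borderLast, det_submatrix_equiv_self, det_fromBlocks₁₁, det_fin_one, invOf_eq_nonsing_inv,
    Matrix.mul_assoc, ← replicateCol_mulVec]
  simp [replicateRow_mul_replicateCol_apply]

theorem leadingMinorsNeZero_borderLast_iff {K : Type*} [Field K] (B : Matrix (Fin m) (Fin m) K)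
    (u v : Fin m → K) (d : K) :
    (borderLast B u v d).LeadingMinorsNeZero ↔
      B.LeadingMinorsNeZero ∧ d - v ⬝ᵥ B⁻¹ *ᵥ u ≠ 0 := by
  rw [leadingMinorsNeZero_succ_iff, submatrix_castSucc_borderLast]
  refine and_congr_right fun hB => ?_
  rw [det_borderLast _ _ _ _ hB.det_ne_zero.isUnit, mul_ne_zero_iff, and_iff_right hB.det_ne_zero]

end Matrix

section Topology

variable {X : Type*} [TopologicalSpace X]

@[fun_prop]
theorem Continuous.matrix_borderLast {R : Type*} [Zero R] [TopologicalSpace R] {m : ℕ}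
    {B : X → Matrix (Fin m) (Fin m) R} {u v : X → Fin m → R} {d : X → R} (hB : Continuous B)
    (hu : Continuous u) (hv : Continuous v) (hd : Continuous d) :
    Continuous fun x => borderLast (B x) (u x) (v x) (d x) :=
  (hB.matrix_fromBlocks hu.matrix_replicateCol hv.matrix_replicateRow
    (continuous_matrix fun _ _ => hd)).matrix_submatrix _ _

variable {K : Type*} [Field K] [TopologicalSpace K] [IsTopologicalDivisionRing K]

theorem Continuous.matrix_inv_of_det_ne_zero {n : Type*} [Fintype n] [DecidableEq n]
    {f : X → Matrix n n K} (hf : Continuous f) (h : ∀ x, (f x).det ≠ 0) :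
    Continuous fun x => (f x)⁻¹ :=
  continuous_iff_continuousAt.2 fun x =>
    (continuousAt_matrix_inv _ (by rw [Ring.inverse_eq_inv']; exact continuousAt_inv₀ (h x))).comp
      hf.continuousAt

variable (K) in
noncomputable def leadingMinorsSchurHomeomorph (m : ℕ) :
    {A : Matrix (Fin (m + 1)) (Fin (m + 1)) K // A.LeadingMinorsNeZero} ≃ₜ
      {B : Matrix (Fin m) (Fin m) K // B.LeadingMinorsNeZero} ×
        (({0}ᶜ : Set K) × ((Fin m → K) × (Fin m → K))) where
  toFun A :=
    (⟨_, ((leadingMinorsNeZero_succ_iff A.1).1 A.2).1⟩,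
      ⟨_, ((leadingMinorsNeZero_borderLast_iff ..).1 ((borderLast_eta A.1).symm ▸ A.2)).2⟩,
      fun i => A.1 i.castSucc (Fin.last m), fun j => A.1 (Fin.last m) j.castSucc)
  invFun p := ⟨borderLast p.1 p.2.2.1 p.2.2.2 (p.2.1 + p.2.2.2 ⬝ᵥ p.1.1⁻¹ *ᵥ p.2.2.1),
    (leadingMinorsNeZero_borderLast_iff ..).2 ⟨p.1.2, by rw [add_sub_cancel_right]; exact p.2.1.2⟩⟩
  left_inv A := Subtype.ext <| by simp [borderLast_eta]
  right_inv p := by ext <;> simp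
  continuous_toFun := by
    have hB : Continuous fun A : {A : Matrix (Fin (m + 1)) (Fin (m + 1)) K //
        A.LeadingMinorsNeZero} => A.1.submatrix Fin.castSucc Fin.castSucc := by fun_prop
    have hB_inv := hB.matrix_inv_of_det_ne_zero fun A =>
      ((leadingMinorsNeZero_succ_iff A.1).1 A.2).1.det_ne_zero
    have hu : Continuous fun A : {A : Matrix (Fin (m + 1)) (Fin (m + 1)) K //
        A.LeadingMinorsNeZero} => fun i : Fin m => A.1 i.castSucc (Fin.last m) :=
      continuous_pi fun _ => continuous_subtype_val.matrix_elem _ _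
    have hv : Continuous fun A : {A : Matrix (Fin (m + 1)) (Fin (m + 1)) K //
        A.LeadingMinorsNeZero} => fun j : Fin m => A.1 (Fin.last m) j.castSucc :=
      continuous_pi fun _ => continuous_subtype_val.matrix_elem _ _
    have hs := (continuous_subtype_val.matrix_elem (Fin.last m) (Fin.last m)).sub
      (hv.dotProduct (hB_inv.matrix_mulVec hu))
    exact (hB.subtype_mk _).prodMk ((hs.subtype_mk _).prodMk (hu.prodMk hv))
  continuous_invFun := by
    have hB_inv := (continuous_subtype_val.comp continuous_fst).matrix_inv_of_det_ne_zero
      fun p : {B : Matrix (Fin m) (Fin m) K // B.LeadingMinorsNeZero} ×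
        (({0}ᶜ : Set K) × ((Fin m → K) × (Fin m → K))) => p.1.2.det_ne_zero
    fun_prop

end Topology

namespace ContinuousMap.HomotopyEquiv

noncomputable def prodContractible (X Y : Type*) [TopologicalSpace X] [TopologicalSpace Y]
    [ContractibleSpace Y] : X × Y ≃ₕ X :=
  ((refl X).prodCongr (ContractibleSpace.hequiv_unit Y).some).trans
    (Homeomorph.prodUnique X Unit).toHomotopyEquiv

end ContinuousMap.HomotopyEquiv

open ContinuousMap.HomotopyEquiv

noncomputable def complZeroHomotopyEquivSphere (E : Type*) [NormedAddCommGroup E]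
    [NormedSpace ℝ E] : ({0}ᶜ : Set E) ≃ₕ Metric.sphere (0 : E) 1 :=
  haveI := (convex_Ioi (0 : ℝ)).contractibleSpace nonempty_Ioi
  (homeomorphUnitSphereProd E).toHomotopyEquiv.trans (prodContractible _ _)

def Homeomorph.finSuccArrowProd (Y : Type*) [TopologicalSpace Y] (n : ℕ) :
    (Fin (n + 1) → Y) ≃ₜ (Fin n → Y) × Y :=
  ((Homeomorph.piCongrLeft (Y := fun _ => Y) finSumFinEquiv).symm.trans
    Homeomorph.sumArrowHomeomorphProdArrow).trans
    ((Homeomorph.refl _).prodCongr (Homeomorph.funUnique (Fin 1) Y))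

noncomputable def leadingMinorsNeZeroHomotopyEquivTorus :
    (m : ℕ) → {A : Matrix (Fin m) (Fin m) ℂ // A.LeadingMinorsNeZero} ≃ₕ
      (Fin m → Metric.sphere (0 : ℂ) 1)
  | 0 =>
    haveI : Nonempty {A : Matrix (Fin 0) (Fin 0) ℂ // A.LeadingMinorsNeZero} :=
      ⟨⟨1, leadingMinorsNeZero_of_fin_zero 1⟩⟩
    haveI : Subsingleton (Matrix (Fin 0) (Fin 0) ℂ) := inferInstanceAs (Subsingleton (Fin 0 → _))
    (ContractibleSpace.hequiv _ _).some
  | m + 1 =>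
    (leadingMinorsSchurHomeomorph ℂ m).toHomotopyEquiv.trans <|
      ((leadingMinorsNeZeroHomotopyEquivTorus m).prodCongr
        ((prodContractible _ _).trans (complZeroHomotopyEquivSphere ℂ))).trans
      (Homeomorph.finSuccArrowProd _ m).symm.toHomotopyEquiv

theorem lu_complement_homotopy_torus_general (m : ℕ) :
    Nonempty (ContinuousMap.HomotopyEquiv
      {A : Matrix (Fin m) (Fin m) ℂ // ∀ k : ℕ, 1 ≤ k → ∀ hk : k ≤ m,
        (A.submatrix (Fin.castLE hk) (Fin.castLE hk)).det ≠ 0}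
      (Fin m → Metric.sphere (0 : ℂ) 1)) :=
  ⟨leadingMinorsNeZeroHomotopyEquivTorus m⟩

/-- The space of complex `m × m` matrices all of whose leading principal minors are
nonzero is homotopy equivalent to the `m`-torus `(S¹)^m`. -/
theorem lu_complement_homotopy_torus (m : ℕ) (hm : 1 ≤ m) :
    Nonempty (ContinuousMap.HomotopyEquiv
      {A : Matrix (Fin m) (Fin m) ℂ // ∀ k : ℕ, 1 ≤ k → ∀ hk : k ≤ m,
        (A.submatrix (Fin.castLE hk) (Fin.castLE hk)).det ≠ 0}
      (Fin m → Metric.sphere (0 : ℂ) 1)) :=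
  lu_complement_homotopy_torus_general m
end

section
/- Let ℓ ≥ 1 and m = 2ℓ. The space of complex skew-symmetric m×m matrices A with det(A^{(2k)}) ≠ 0 for all k = 1, …, ℓ (with the subspace topology from the space of m×m complex matrices) is homotopy equivalent to the ℓ-torus (S¹)^ℓ. -/
/-!
Cut a skew-symmetric matrix `A` of size `2n + 2` into blocks of sizes `2` and `2n`. Its
top-left block is the corner `A^{(2)} = a • !![0, 1; -1, 0]`, so `a ≠ 0`; the Schur complement
`S` of this block is again skew-symmetric, and `det A^{(2k+2)} = a² det S^{(2k)}`. Hence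
`A ↦ (S, a, C)`, with `C` the top-right block, identifies the space of size `2n + 2` with the
space of size `2n` times `ℂ ∖ {0}` times a vector space. Since `ℂ ∖ {0} ≅ S¹ × (0, ∞)` and the
other factors are contractible, induction on `n` gives the torus.
-/

open Matrix
open scoped ContinuousMap

variable {K : Type*} [Field K]

namespace Matrix

def skewTwo (a : K) : Matrix (Fin 2) (Fin 2) K := a • !![0, 1; -1, 0]

lemma skewTwo_neg (a : K) : skewTwo (-a) = -skewTwo a := by
  simp [skewTwo]

lemma skewTwo_mul_skewTwo (a b : K) : skewTwo a * skewTwo b = -(a * b) • 1 := by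
  ext i j
  fin_cases i <;> fin_cases j <;> simp [skewTwo]

lemma det_skewTwo (a : K) : (skewTwo a).det = a ^ 2 := by
  simp [skewTwo, sq]

lemma transpose_skewTwo (a : K) : (skewTwo a)ᵀ = -skewTwo a := by
  ext i j
  fin_cases i <;> fin_cases j <;> simp [skewTwo]

variable {p q : Type*}

def skewBlocks (a : K) (C : Matrix (Fin 2) p K) (E : Matrix p p K) :
    Matrix (Fin 2 ⊕ p) (Fin 2 ⊕ p) K :=
  fromBlocks (skewTwo a) C (-Cᵀ) E

/-- The Schur complement `E - (-Cᵀ) * (skewTwo a)⁻¹ * C` of the top-left block of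
`skewBlocks a C E`, using `(skewTwo a)⁻¹ = skewTwo (-a⁻¹)`. -/
def skewSchurCompl (a : K) (C : Matrix (Fin 2) p K) (E : Matrix p p K) : Matrix p p K :=
  E + Cᵀ * skewTwo (-a⁻¹) * C

lemma skewSchurCompl_neg_skewSchurCompl (a : K) (C : Matrix (Fin 2) p K) (E : Matrix p p K) :
    skewSchurCompl (-a) C (skewSchurCompl a C E) = E := by
  simp [skewSchurCompl, skewTwo_neg, Matrix.mul_neg, Matrix.neg_mul]

lemma skewSchurCompl_skewSchurCompl_neg (a : K) (C : Matrix (Fin 2) p K) (E : Matrix p p K) :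
    skewSchurCompl a C (skewSchurCompl (-a) C E) = E := by
  simpa using skewSchurCompl_neg_skewSchurCompl (-a) C E

lemma transpose_skewSchurCompl {E : Matrix p p K} (hE : Eᵀ = -E) (a : K)
    (C : Matrix (Fin 2) p K) :
    (skewSchurCompl a C E)ᵀ = -skewSchurCompl a C E := by
  simp only [skewSchurCompl, transpose_add, hE, transpose_mul, transpose_transpose,
    transpose_skewTwo, Matrix.mul_neg, Matrix.neg_mul, Matrix.mul_assoc, neg_add]

lemma transpose_skewBlocks {E : Matrix p p K} (hE : Eᵀ = -E) (a : K) (C : Matrix (Fin 2) p K) :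
    (skewBlocks a C E)ᵀ = -skewBlocks a C E := by
  simp [skewBlocks, fromBlocks_transpose, fromBlocks_neg, transpose_skewTwo, hE]

lemma eq_skewBlocks_of_transpose_eq_neg [NeZero (2 : K)] {M : Matrix (Fin 2 ⊕ p) (Fin 2 ⊕ p) K}
    (hM : Mᵀ = -M) :
    M = skewBlocks (M (.inl 0) (.inl 1)) M.toBlocks₁₂ M.toBlocks₂₂ := by
  have hMij (i j) : M j i = -M i j := congrFun (congrFun hM i) j
  have hMii (i) : M i i = 0 := by
    have h2 : (2 : K) * M i i = 0 := by linear_combination hMij i i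
    simpa [two_ne_zero] using h2
  rw [skewBlocks, ← fromBlocks_toBlocks M]
  congr 1
  · ext i j
    fin_cases i <;> fin_cases j <;> simp [skewTwo, toBlocks₁₁, hMii, hMij (.inl 0)]
  · ext i j
    simp [toBlocks₂₁, toBlocks₁₂, hMij (.inl j)]

lemma skewBlocks_submatrix_sumMap (a : K) (C : Matrix (Fin 2) p K) (E : Matrix p p K)
    (g : q → p) :
    (skewBlocks a C E).submatrix (Sum.map id g) (Sum.map id g)
      = skewBlocks a (C.submatrix id g) (E.submatrix g g) := by
  ext (x | x) (y | y) <;> rfl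

lemma skewSchurCompl_submatrix (a : K) (C : Matrix (Fin 2) p K) (E : Matrix p p K)
    (g : q → p) :
    (skewSchurCompl a C E).submatrix g g
      = skewSchurCompl a (C.submatrix id g) (E.submatrix g g) := by
  ext i j
  simp [skewSchurCompl, mul_apply]

variable [Fintype p] [DecidableEq p]

lemma det_skewBlocks {a : K} (ha : a ≠ 0) (C : Matrix (Fin 2) p K) (E : Matrix p p K) :
    (skewBlocks a C E).det = a ^ 2 * (skewSchurCompl a C E).det := by
  let _ : Invertible (skewTwo a) :=
    ⟨skewTwo (-a⁻¹), by simp [skewTwo_mul_skewTwo, ha], by simp [skewTwo_mul_skewTwo, ha]⟩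
  rw [skewBlocks, det_fromBlocks₁₁, det_skewTwo, Matrix.neg_mul, Matrix.neg_mul, sub_neg_eq_add]
  rfl

lemma det_skewBlocks_of_isEmpty [IsEmpty p] (a : K) (C : Matrix (Fin 2) p K) (E : Matrix p p K) :
    (skewBlocks a C E).det = a ^ 2 := by
  rw [skewBlocks, Subsingleton.elim (-Cᵀ) 0, det_fromBlocks_zero₂₁, det_skewTwo, det_isEmpty,
    mul_one]

end Matrix

def finTwoSumEquiv (n : ℕ) : Fin 2 ⊕ Fin (2 * n) ≃ Fin (2 * (n + 1)) :=
  finSumFinEquiv.trans (finCongr (by ring))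

lemma castLE_finTwoSumEquiv {n k : ℕ} (h : 2 * (k + 1) ≤ 2 * (n + 1)) (hk : 2 * k ≤ 2 * n)
    (x : Fin 2 ⊕ Fin (2 * k)) :
    Fin.castLE h (finTwoSumEquiv k x) = finTwoSumEquiv n (Sum.map id (Fin.castLE hk) x) := by
  cases x <;> ext <;> simp [finTwoSumEquiv]

lemma det_submatrix_castLE_succ {R : Type*} [CommRing R] {n k : ℕ}
    (A : Matrix (Fin (2 * (n + 1))) (Fin (2 * (n + 1))) R)
    (h : 2 * (k + 1) ≤ 2 * (n + 1)) (hk : 2 * k ≤ 2 * n) :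
    (A.submatrix (Fin.castLE h) (Fin.castLE h)).det
      = ((A.submatrix (finTwoSumEquiv n) (finTwoSumEquiv n)).submatrix
          (Sum.map id (Fin.castLE hk)) (Sum.map id (Fin.castLE hk))).det := by
  rw [← det_submatrix_equiv_self (finTwoSumEquiv k), submatrix_submatrix, submatrix_submatrix]
  congr 2 <;> funext x <;> exact castLE_finTwoSumEquiv h hk x

def EvenLeadingMinorsNeZero {n : ℕ} (A : Matrix (Fin (2 * n)) (Fin (2 * n)) K) : Prop :=
  ∀ k : ℕ, 1 ≤ k → ∀ hk : 2 * k ≤ 2 * n, (A.submatrix (Fin.castLE hk) (Fin.castLE hk)).det ≠ 0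

section EvenLeadingMinors

variable {n : ℕ} {A : Matrix (Fin (2 * (n + 1))) (Fin (2 * (n + 1))) K} {a : K}
  {C : Matrix (Fin 2) (Fin (2 * n)) K} {E : Matrix (Fin (2 * n)) (Fin (2 * n)) K}

lemma ne_zero_of_evenLeadingMinorsNeZero
    (hA : A.submatrix (finTwoSumEquiv n) (finTwoSumEquiv n) = skewBlocks a C E)
    (hminors : EvenLeadingMinorsNeZero A) : a ≠ 0 := by
  have : IsEmpty (Fin (2 * 0)) := inferInstanceAs (IsEmpty (Fin 0))
  have h := hminors 1 le_rfl (by omega)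
  rwa [det_submatrix_castLE_succ A _ (Nat.zero_le _), hA, skewBlocks_submatrix_sumMap,
    det_skewBlocks_of_isEmpty, pow_ne_zero_iff two_ne_zero] at h

lemma det_submatrix_castLE_succ_of_eq_skewBlocks (ha : a ≠ 0)
    (hA : A.submatrix (finTwoSumEquiv n) (finTwoSumEquiv n) = skewBlocks a C E)
    {k : ℕ} (h : 2 * (k + 1) ≤ 2 * (n + 1)) (hk : 2 * k ≤ 2 * n) :
    (A.submatrix (Fin.castLE h) (Fin.castLE h)).det
      = a ^ 2 * ((skewSchurCompl a C E).submatrix (Fin.castLE hk) (Fin.castLE hk)).det := by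
  rw [det_submatrix_castLE_succ A h hk, hA, skewBlocks_submatrix_sumMap, det_skewBlocks ha,
    skewSchurCompl_submatrix]

lemma evenLeadingMinorsNeZero_iff_skewSchurCompl (ha : a ≠ 0)
    (hA : A.submatrix (finTwoSumEquiv n) (finTwoSumEquiv n) = skewBlocks a C E) :
    EvenLeadingMinorsNeZero A ↔ EvenLeadingMinorsNeZero (skewSchurCompl a C E) := by
  constructor
  · intro hminors k hk1 hk
    have h := hminors (k + 1) (by omega) (by omega)
    rw [det_submatrix_castLE_succ_of_eq_skewBlocks ha hA _ hk] at h
    exact right_ne_zero_of_mul h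
  · rintro hminors (_ | k) hk1 h
    · omega
    rw [det_submatrix_castLE_succ_of_eq_skewBlocks ha hA h (by omega)]
    refine mul_ne_zero (pow_ne_zero _ ha) ?_
    rcases Nat.eq_zero_or_pos k with rfl | hk
    · have : IsEmpty (Fin (2 * 0)) := inferInstanceAs (IsEmpty (Fin 0))
      simp [det_isEmpty]
    · exact hminors k hk _

end EvenLeadingMinors

abbrev SkewEvenMinorsNeZero (K : Type*) [Field K] (n : ℕ) :=
  {A : Matrix (Fin (2 * n)) (Fin (2 * n)) K // Aᵀ = -A ∧ EvenLeadingMinorsNeZero A}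

instance (K : Type*) [Field K] : Unique (SkewEvenMinorsNeZero K 0) where
  default := ⟨0, by simp, fun k hk1 hk => by omega⟩
  uniq A := Subtype.ext (Subsingleton.elim (α := Matrix (Fin 0) (Fin 0) K) _ _)

section Continuity

variable [TopologicalSpace K] [IsTopologicalDivisionRing K] {X : Type*} [TopologicalSpace X]
  {p : Type*} {a : X → K} {C : X → Matrix (Fin 2) p K} {E : X → Matrix p p K}

lemma Continuous.skewTwo (ha : Continuous a) : Continuous fun x => Matrix.skewTwo (a x) :=
  ha.smul continuous_const

lemma Continuous.skewBlocks (ha : Continuous a) (hC : Continuous C) (hE : Continuous E) :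
    Continuous fun x => Matrix.skewBlocks (a x) (C x) (E x) :=
  ha.skewTwo.matrix_fromBlocks hC hC.matrix_transpose.neg hE

lemma Continuous.skewSchurCompl (ha : Continuous a) (ha₀ : ∀ x, a x ≠ 0) (hC : Continuous C)
    (hE : Continuous E) : Continuous fun x => Matrix.skewSchurCompl (a x) (C x) (E x) :=
  hE.add ((hC.matrix_transpose.matrix_mul (ha.inv₀ ha₀).neg.skewTwo).matrix_mul hC)

end Continuity

namespace SkewEvenMinorsNeZero

variable {n : ℕ} (A : SkewEvenMinorsNeZero K (n + 1))

def blocks : Matrix (Fin 2 ⊕ Fin (2 * n)) (Fin 2 ⊕ Fin (2 * n)) K :=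
  A.1.submatrix (finTwoSumEquiv n) (finTwoSumEquiv n)

def pivot : K := A.blocks (.inl 0) (.inl 1)

lemma transpose_blocks : A.blocksᵀ = -A.blocks := by
  rw [blocks, transpose_submatrix, A.2.1]
  rfl

lemma transpose_toBlocks₂₂_blocks : A.blocks.toBlocks₂₂ᵀ = -A.blocks.toBlocks₂₂ := by
  ext i j
  exact congrFun (congrFun A.transpose_blocks (.inr i)) (.inr j)

lemma blocks_injective :
    Function.Injective (blocks : SkewEvenMinorsNeZero K (n + 1) → _) := fun A B h => by
  ext i j
  simpa [blocks] using
    congrFun (congrFun h ((finTwoSumEquiv n).symm i)) ((finTwoSumEquiv n).symm j)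

variable [NeZero (2 : K)]

lemma blocks_eq_skewBlocks :
    A.blocks = skewBlocks A.pivot A.blocks.toBlocks₁₂ A.blocks.toBlocks₂₂ :=
  eq_skewBlocks_of_transpose_eq_neg A.transpose_blocks

lemma pivot_ne_zero : A.pivot ≠ 0 :=
  ne_zero_of_evenLeadingMinorsNeZero A.blocks_eq_skewBlocks A.2.2

def schurCompl : SkewEvenMinorsNeZero K n :=
  ⟨Matrix.skewSchurCompl A.pivot A.blocks.toBlocks₁₂ A.blocks.toBlocks₂₂,
    transpose_skewSchurCompl A.transpose_toBlocks₂₂_blocks _ _,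
    (evenLeadingMinorsNeZero_iff_skewSchurCompl A.pivot_ne_zero A.blocks_eq_skewBlocks).1 A.2.2⟩

lemma coe_schurCompl :
    (A.schurCompl : Matrix (Fin (2 * n)) (Fin (2 * n)) K)
      = Matrix.skewSchurCompl A.pivot A.blocks.toBlocks₁₂ A.blocks.toBlocks₂₂ :=
  rfl

end SkewEvenMinorsNeZero

def SkewEvenMinorsNeZero.ofSchurCompl {n : ℕ} (S : SkewEvenMinorsNeZero K n) {a : K}
    (ha : a ≠ 0) (C : Matrix (Fin 2) (Fin (2 * n)) K) : SkewEvenMinorsNeZero K (n + 1) :=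
  have hblocks : ((skewBlocks a C (skewSchurCompl (-a) C S.1)).submatrix
      (finTwoSumEquiv n).symm (finTwoSumEquiv n).symm).submatrix
      (finTwoSumEquiv n) (finTwoSumEquiv n) = skewBlocks a C (skewSchurCompl (-a) C S.1) := by
    simp [submatrix_submatrix]
  ⟨(skewBlocks a C (skewSchurCompl (-a) C S.1)).submatrix
      (finTwoSumEquiv n).symm (finTwoSumEquiv n).symm,
    by rw [transpose_submatrix, transpose_skewBlocks (transpose_skewSchurCompl S.2.1 _ _)]; rfl,
    (evenLeadingMinorsNeZero_iff_skewSchurCompl ha hblocks).2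
      ((skewSchurCompl_skewSchurCompl_neg a C S.1).symm ▸ S.2.2)⟩

lemma SkewEvenMinorsNeZero.blocks_ofSchurCompl {n : ℕ} (S : SkewEvenMinorsNeZero K n) {a : K}
    (ha : a ≠ 0) (C : Matrix (Fin 2) (Fin (2 * n)) K) :
    (S.ofSchurCompl ha C).blocks = skewBlocks a C (skewSchurCompl (-a) C S.1) := by
  simp [ofSchurCompl, blocks, submatrix_submatrix]

section SchurHomeomorph

variable (K) [NeZero (2 : K)] [TopologicalSpace K] [IsTopologicalDivisionRing K] (n : ℕ)

def skewSchurHomeomorph : SkewEvenMinorsNeZero K (n + 1) ≃ₜ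
    SkewEvenMinorsNeZero K n × ({a : K // a ≠ 0} × Matrix (Fin 2) (Fin (2 * n)) K) where
  toFun A := (A.schurCompl, ⟨A.pivot, A.pivot_ne_zero⟩, A.blocks.toBlocks₁₂)
  invFun S := S.1.ofSchurCompl S.2.1.2 S.2.2
  left_inv A := SkewEvenMinorsNeZero.blocks_injective <| by
    rw [SkewEvenMinorsNeZero.blocks_ofSchurCompl, SkewEvenMinorsNeZero.coe_schurCompl,
      skewSchurCompl_neg_skewSchurCompl, ← A.blocks_eq_skewBlocks]
  right_inv := by
    rintro ⟨S, ⟨a, ha⟩, C⟩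
    have hblocks := S.blocks_ofSchurCompl ha C
    have hpivot : (S.ofSchurCompl ha C).pivot = a := by
      simp [SkewEvenMinorsNeZero.pivot, hblocks, skewBlocks, skewTwo]
    refine Prod.ext (Subtype.ext ?_) (Prod.ext (Subtype.ext hpivot) ?_)
    · simp [SkewEvenMinorsNeZero.coe_schurCompl, hpivot, hblocks, skewBlocks,
        skewSchurCompl_skewSchurCompl_neg]
    · simp [hblocks, skewBlocks]
  continuous_toFun := by
    have hblocks :
        Continuous (SkewEvenMinorsNeZero.blocks : SkewEvenMinorsNeZero K (n + 1) → _) :=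
      continuous_subtype_val.matrix_submatrix _ _
    have hpivot := hblocks.matrix_elem (.inl 0) (.inl 1)
    have hC := hblocks.matrix_submatrix Sum.inl Sum.inr
    have hE := hblocks.matrix_submatrix Sum.inr Sum.inr
    exact ((hpivot.skewSchurCompl (fun A => A.pivot_ne_zero) hC hE).subtype_mk _).prodMk
      ((hpivot.subtype_mk _).prodMk hC)
  continuous_invFun := by
    have ha : Continuous fun S : SkewEvenMinorsNeZero K n ×
        ({a : K // a ≠ 0} × Matrix (Fin 2) (Fin (2 * n)) K) => S.2.1.1 := by
      fun_prop
    unfold SkewEvenMinorsNeZero.ofSchurCompl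
    refine Continuous.subtype_mk (Continuous.matrix_submatrix ?_ _ _) _
    exact ha.skewBlocks (by fun_prop) (ha.neg.skewSchurCompl (fun S => neg_ne_zero.2 S.2.1.2)
      (by fun_prop) (by fun_prop))

end SchurHomeomorph

lemma nonempty_prod_homotopyEquiv_of_contractibleSpace (X Y : Type*) [TopologicalSpace X]
    [TopologicalSpace Y] [ContractibleSpace Y] : Nonempty (X × Y ≃ₕ X) := by
  obtain ⟨h⟩ := ContractibleSpace.hequiv_unit Y
  exact ⟨((ContinuousMap.HomotopyEquiv.refl X).prodCongr h).trans
    (Homeomorph.prodUnique X Unit).toHomotopyEquiv⟩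

lemma nonempty_compl_zero_homotopyEquiv_sphere (E : Type*) [NormedAddCommGroup E]
    [NormedSpace ℝ E] : Nonempty (({0}ᶜ : Set E) ≃ₕ Metric.sphere (0 : E) 1) := by
  have := (convex_Ioi (0 : ℝ)).contractibleSpace Set.nonempty_Ioi
  obtain ⟨h⟩ := nonempty_prod_homotopyEquiv_of_contractibleSpace (Metric.sphere (0 : E) 1)
    (Set.Ioi (0 : ℝ))
  exact ⟨(homeomorphUnitSphereProd E).toHomotopyEquiv.trans h⟩

def Fin.snocHomeomorph (n : ℕ) (X : Type*) [TopologicalSpace X] :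
    (Fin n → X) × X ≃ₜ (Fin (n + 1) → X) :=
  ((Homeomorph.refl _).prodCongr (Homeomorph.funUnique (Fin 1) X).symm).trans
    (Fin.appendHomeomorph n 1)

theorem skew_cholesky_complement_homotopy_torus_general (ℓ : ℕ) :
    Nonempty (ContinuousMap.HomotopyEquiv
      {A : Matrix (Fin (2 * ℓ)) (Fin (2 * ℓ)) ℂ // Aᵀ = -A ∧
        ∀ k : ℕ, 1 ≤ k → ∀ hk : 2 * k ≤ 2 * ℓ,
          (A.submatrix (Fin.castLE hk) (Fin.castLE hk)).det ≠ 0}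
      (Fin ℓ → Metric.sphere (0 : ℂ) 1)) := by
  change Nonempty (SkewEvenMinorsNeZero ℂ ℓ ≃ₕ (Fin ℓ → Metric.sphere (0 : ℂ) 1))
  induction ℓ with
  | zero => exact ⟨(Homeomorph.homeomorphOfUnique _ _).toHomotopyEquiv⟩
  | succ n ih =>
    obtain ⟨torus⟩ := ih
    obtain ⟨circle⟩ := nonempty_compl_zero_homotopyEquiv_sphere ℂ
    obtain ⟨collapse⟩ := nonempty_prod_homotopyEquiv_of_contractibleSpace ({0}ᶜ : Set ℂ)
      (Matrix (Fin 2) (Fin (2 * n)) ℂ)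
    exact ⟨(skewSchurHomeomorph ℂ n).toHomotopyEquiv.trans <|
      (torus.prodCongr (collapse.trans circle)).trans (Fin.snocHomeomorph n _).toHomotopyEquiv⟩

/-- The space of complex skew-symmetric `2ℓ × 2ℓ` matrices `A` with
`det (A^(2k)) ≠ 0` for `k = 1, …, ℓ` is homotopy equivalent to the `ℓ`-torus
`(S¹)^ℓ`. -/
theorem skew_cholesky_complement_homotopy_torus (ℓ : ℕ) (hℓ : 1 ≤ ℓ) :
    Nonempty (ContinuousMap.HomotopyEquiv
      {A : Matrix (Fin (2 * ℓ)) (Fin (2 * ℓ)) ℂ // Aᵀ = -A ∧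
        ∀ k : ℕ, 1 ≤ k → ∀ hk : 2 * k ≤ 2 * ℓ,
          (A.submatrix (Fin.castLE hk) (Fin.castLE hk)).det ≠ 0}
      (Fin ℓ → Metric.sphere (0 : ℂ) 1)) :=
  skew_cholesky_complement_homotopy_torus_general ℓ
end

section
/- Let m ≥ 2. The space of complex m×m matrices A with det(A^{(k)}) ≠ 0 for all k = 1, …, m and det(Â^{(j)}) ≠ 0 for all j = 1, …, m-1, where Â is obtained from A by deleting its first column (with the subspace topology from the space of m×m complex matrices), is homotopy equivalent to the (2m-1)-torus (S¹)^{2m-1}. -/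
/-!
Order the minors as `D₁, E₁, D₂, E₂, …, D_m` with `D_l = det A^(l)` and `E_l = det Â^(l)`.
The `i`-th of them is affine in the entry `(i / 2, i / 2 + i % 2)`, with slope the minor two
places earlier (or `1`), and no earlier minor involves that entry. So, starting from any matrix
`x`, adjusting these entries one after another produces a matrix whose minors are any prescribed
nonzero values `z`, continuously in `(x, z)`, and it leaves `x` unchanged if its minors are
already `z`. The space is thus covered by sections of the minor map `ψ` to `(ℂˣ)^(2m-1)`,
parametrised by the contractible space of all matrices; contracting the parameter space gives a
homotopy from the identity to a section composed with `ψ`. Finally `ℂˣ` retracts onto `S¹`.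
-/

open Matrix ContinuousMap

theorem nonempty_homotopyEquiv_of_contractible_sections {X E T : Type*} [TopologicalSpace X]
    [TopologicalSpace E] [TopologicalSpace T] [ContractibleSpace E]
    (ι : C(X, E)) (ψ : C(X, T)) (θ : C(E × T, X))
    (hθψ : ∀ x, θ (ι x, ψ x) = x) (hψθ : ∀ e t, ψ (θ (e, t)) = t) :
    Nonempty (X ≃ₕ T) := by
  obtain ⟨e₀, ⟨H⟩⟩ := id_nullhomotopic E
  let φ : C(T, X) := θ.comp ((const T e₀).prodMk (.id T))
  let F : Homotopy (.id X) (φ.comp ψ) :=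
    { toFun := fun p => θ (H (p.1, ι p.2), ψ p.2)
      map_zero_left := fun x => by simp [hθψ]
      map_one_left := fun x => by simp [φ] }
  exact ⟨⟨ψ, φ, ⟨F.symm⟩, by rw [show ψ.comp φ = .id T from ext fun t => hψθ e₀ t]⟩⟩

theorem nonempty_homotopyEquiv_ne_zero_sphere (E : Type*) [NormedAddCommGroup E]
    [NormedSpace ℝ E] :
    Nonempty ({v : E // v ≠ 0} ≃ₕ Metric.sphere (0 : E) 1) := by
  have : ContractibleSpace (Set.Ioi (0 : ℝ)) :=
    (convex_Ioi 0).contractibleSpace Set.nonempty_Ioi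
  have hnorm (v : {v : E // v ≠ 0}) : ‖(v : E)‖ ≠ 0 := norm_ne_zero_iff.2 v.2
  refine nonempty_homotopyEquiv_of_contractible_sections (E := Set.Ioi (0 : ℝ))
    ⟨fun v => ⟨‖(v : E)‖, norm_pos_iff.2 v.2⟩, by fun_prop⟩
    ⟨fun v => ⟨‖(v : E)‖⁻¹ • (v : E), by simp [norm_smul, v.2]⟩,
      by fun_prop (disch := exact hnorm)⟩
    ⟨fun p => ⟨(p.1 : ℝ) • (p.2 : E),
      smul_ne_zero (Set.mem_Ioi.1 p.1.2).ne' (ne_zero_of_mem_unit_sphere p.2)⟩, by fun_prop⟩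
    (fun v => ?_) (fun r u => ?_)
  · ext
    simp [smul_smul, hnorm v]
  · ext
    have hr : 0 < (r : ℝ) := r.2
    simp [norm_smul, smul_smul, hr.ne', abs_of_pos hr]

namespace Matrix

theorem continuous_single {α ι κ : Type*} [DecidableEq ι] [DecidableEq κ] [Zero α]
    [TopologicalSpace α] (i : ι) (j : κ) : Continuous (single i j : α → Matrix ι κ α) :=
  continuous_matrix fun a b => by
    simp only [single_apply]
    split_ifs
    exacts [continuous_id, continuous_const]

variable {R : Type*} [CommRing R]

theorem det_add_single_last {n : ℕ} (N : Matrix (Fin (n + 1)) (Fin (n + 1)) R) (t : R) :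
    (N + single (Fin.last n) (Fin.last n) t).det =
      N.det + t * (N.submatrix Fin.castSucc Fin.castSucc).det := by
  have hrow : N + single (Fin.last n) (Fin.last n) t =
      N.updateRow (Fin.last n) (N (Fin.last n) + t • Pi.single (Fin.last n) 1) := by
    ext i j
    simp only [add_apply, single_apply, updateRow_apply, Pi.add_apply, Pi.smul_apply,
      Pi.single_apply, smul_eq_mul]
    split_ifs <;> simp_all
  rw [hrow, det_updateRow_add, updateRow_eq_self, det_updateRow_smul, ← adjugate_apply,
    adjugate_fin_succ_eq_det_submatrix, Fin.succAbove_last, ← two_mul, pow_mul]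
  simp

variable {m : ℕ}

/-- The minor of `M` on the first `l` rows and the columns `s, …, s + l - 1`, so `s = 0` gives
`det M^(l)` and `s = 1` gives `det M̂^(l)`; junk value `0` when `m < l + s`. -/
def shiftedLeadingMinor (M : Matrix (Fin m) (Fin m) R) (s l : ℕ) : R :=
  if h : l + s ≤ m then
    (M.submatrix (Fin.castLE (by omega)) fun b : Fin l => ⟨b + s, by omega⟩).det
  else 0

theorem shiftedLeadingMinor_zero_left (M : Matrix (Fin m) (Fin m) R) {l : ℕ} (hl : l ≤ m) :
    M.shiftedLeadingMinor 0 l = (M.submatrix (Fin.castLE hl) (Fin.castLE hl)).det := by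
  rw [shiftedLeadingMinor, dif_pos (by omega)]
  rfl

theorem shiftedLeadingMinor_one_left (M : Matrix (Fin m) (Fin m) R) {l : ℕ} (hl : l + 1 ≤ m) :
    M.shiftedLeadingMinor 1 l = (Matrix.of fun a b : Fin l =>
      M (Fin.castLE (by omega) a) ⟨(b : ℕ) + 1, by omega⟩).det := by
  rw [shiftedLeadingMinor, dif_pos hl]
  rfl

theorem shiftedLeadingMinor_zero_right (M : Matrix (Fin m) (Fin m) R) {s : ℕ} (hs : s ≤ m) :
    M.shiftedLeadingMinor s 0 = 1 := by
  rw [shiftedLeadingMinor, dif_pos (by omega), det_isEmpty]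

theorem shiftedLeadingMinor_add_single_of_le (M : Matrix (Fin m) (Fin m) R) (s l : ℕ)
    (i j : Fin m) (t : R) (h : l ≤ i ∨ l + s ≤ j) :
    (M + single i j t).shiftedLeadingMinor s l = M.shiftedLeadingMinor s l := by
  unfold shiftedLeadingMinor
  split_ifs with hl
  · congr 1
    ext a b
    have : ¬ (i = Fin.castLE (by omega) a ∧ j = (⟨b + s, by omega⟩ : Fin m)) := by
      simp only [Fin.ext_iff, Fin.val_castLE]
      omega
    simp [this]
  · rfl

theorem shiftedLeadingMinor_add_single_corner (M : Matrix (Fin m) (Fin m) R) {s : ℕ}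
    (i j : Fin m) (hj : (j : ℕ) = i + s) (t : R) :
    (M + single i j t).shiftedLeadingMinor s (i + 1) =
      M.shiftedLeadingMinor s (i + 1) + t * M.shiftedLeadingMinor s i := by
  unfold shiftedLeadingMinor
  rw [dif_pos (by omega), dif_pos (by omega), dif_pos (show (i : ℕ) + s ≤ m by omega)]
  convert det_add_single_last (M.submatrix (Fin.castLE (by omega))
    fun b : Fin (i + 1) => (⟨b + s, by omega⟩ : Fin m)) t using 2
  · ext a b
    simp [single_apply, Fin.ext_iff, hj]
  · rfl

theorem continuous_shiftedLeadingMinor [TopologicalSpace R] [IsTopologicalRing R] (s l : ℕ) :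
    Continuous fun M : Matrix (Fin m) (Fin m) R => M.shiftedLeadingMinor s l := by
  unfold shiftedLeadingMinor
  split_ifs
  · fun_prop
  · exact continuous_const

/-- `D₁, E₁, D₂, E₂, …`: the minors `D_l = det M^(l)` and `E_l = det M̂^(l)`, interleaved. -/
def interleavedMinor (M : Matrix (Fin m) (Fin m) R) (i : ℕ) : R :=
  M.shiftedLeadingMinor (i % 2) (i / 2 + 1)

/-- The cofactor of the corner entry `(i / 2, i / 2 + i % 2)` in the `i`-th interleaved minor:
the `(i - 2)`-th interleaved minor, or `1` if `i < 2`. -/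
def interleavedCofactor (M : Matrix (Fin m) (Fin m) R) (i : ℕ) : R :=
  M.shiftedLeadingMinor (i % 2) (i / 2)

theorem forall_interleavedMinor_ne_zero_iff (A : Matrix (Fin m) (Fin m) R) :
    (∀ i : Fin (2 * m - 1), A.interleavedMinor i ≠ 0) ↔
      (∀ k, 1 ≤ k → k ≤ m → A.shiftedLeadingMinor 0 k ≠ 0) ∧
        ∀ j, 1 ≤ j → j + 1 ≤ m → A.shiftedLeadingMinor 1 j ≠ 0 := by
  refine ⟨fun h => ⟨fun k hk hkm => ?_, fun j hj hjm => ?_⟩, fun ⟨hD, hE⟩ i => ?_⟩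
  · have := h ⟨2 * (k - 1), by omega⟩
    rwa [interleavedMinor, show 2 * (k - 1) % 2 = 0 by omega,
      show 2 * (k - 1) / 2 + 1 = k by omega] at this
  · have := h ⟨2 * (j - 1) + 1, by omega⟩
    rwa [interleavedMinor, show (2 * (j - 1) + 1) % 2 = 1 by omega,
      show (2 * (j - 1) + 1) / 2 + 1 = j by omega] at this
  · have := i.2
    rw [interleavedMinor]
    rcases Nat.mod_two_eq_zero_or_one i with h2 | h2
    · rw [h2]
      exact hD _ (by omega) (by omega)
    · rw [h2]
      exact hE _ (by omega) (by omega)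

theorem interleavedMinor_add_single_corner (M : Matrix (Fin m) (Fin m) R) {i : ℕ}
    (a b : Fin m) (ha : (a : ℕ) = i / 2) (hb : (b : ℕ) = i / 2 + i % 2) (t : R) :
    (M + single a b t).interleavedMinor i = M.interleavedMinor i + t * M.interleavedCofactor i := by
  simpa only [interleavedMinor, interleavedCofactor, ha] using
    M.shiftedLeadingMinor_add_single_corner a b (by omega) t

theorem interleavedMinor_add_single_corner_of_lt (M : Matrix (Fin m) (Fin m) R) {i j : ℕ}
    (a b : Fin m) (ha : (a : ℕ) = i / 2) (hb : (b : ℕ) = i / 2 + i % 2) (hj : j < i) (t : R) :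
    (M + single a b t).interleavedMinor j = M.interleavedMinor j :=
  M.shiftedLeadingMinor_add_single_of_le _ _ _ _ t (by omega)

theorem interleavedCofactor_ne_zero [Nontrivial R] (M : Matrix (Fin m) (Fin m) R) {i : ℕ}
    (hi : i < 2 * m - 1) (h : 2 ≤ i → M.interleavedMinor (i - 2) ≠ 0) :
    M.interleavedCofactor i ≠ 0 := by
  by_cases hi2 : i < 2
  · rw [interleavedCofactor, show i / 2 = 0 by omega, M.shiftedLeadingMinor_zero_right (by omega)]
    exact one_ne_zero
  · have h := h (by omega)
    rwa [interleavedMinor, show (i - 2) % 2 = i % 2 by omega,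
      show (i - 2) / 2 + 1 = i / 2 by omega] at h

section Fitting

variable {K : Type*} [Field K] (z : Fin (2 * m - 1) → K)

/-- Changes the corner entry of the `i`-th interleaved minor so that this minor becomes `z i`,
provided its cofactor is nonzero. -/
def fitMinor (M : Matrix (Fin m) (Fin m) K) (i : ℕ) : Matrix (Fin m) (Fin m) K :=
  if hi : i < 2 * m - 1 then
    M + single (⟨i / 2, by omega⟩ : Fin m) (⟨i / 2 + i % 2, by omega⟩ : Fin m)
      ((z ⟨i, hi⟩ - M.interleavedMinor i) / M.interleavedCofactor i)
  else M

def fitMinors (x : Matrix (Fin m) (Fin m) K) : ℕ → Matrix (Fin m) (Fin m) K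
  | 0 => x
  | n + 1 => fitMinor z (fitMinors x n) n

variable {z}

theorem interleavedMinor_fitMinor_of_lt (M : Matrix (Fin m) (Fin m) K) {i j : ℕ} (hj : j < i) :
    (fitMinor z M i).interleavedMinor j = M.interleavedMinor j := by
  unfold fitMinor
  split_ifs with hi
  · exact M.interleavedMinor_add_single_corner_of_lt _ _ rfl rfl hj _
  · rfl

theorem interleavedMinor_fitMinor_self (M : Matrix (Fin m) (Fin m) K) {i : ℕ}
    (hi : i < 2 * m - 1) (h : M.interleavedCofactor i ≠ 0) :
    (fitMinor z M i).interleavedMinor i = z ⟨i, hi⟩ := by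
  rw [fitMinor, dif_pos hi, interleavedMinor_add_single_corner _ _ _ rfl rfl, div_mul_cancel₀ _ h,
    add_sub_cancel]

theorem fitMinor_eq_self (M : Matrix (Fin m) (Fin m) K) {i : ℕ}
    (h : ∀ hi : i < 2 * m - 1, M.interleavedMinor i = z ⟨i, hi⟩) : fitMinor z M i = M := by
  unfold fitMinor
  split_ifs with hi
  · rw [h hi, sub_self, zero_div, single_zero, add_zero]
  · rfl

theorem interleavedMinor_fitMinors (hz : ∀ i, z i ≠ 0) (x : Matrix (Fin m) (Fin m) K) (n : ℕ) :
    ∀ j, j < n → ∀ hj : j < 2 * m - 1, (fitMinors z x n).interleavedMinor j = z ⟨j, hj⟩ := by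
  induction n with
  | zero => exact fun j hjn => (Nat.not_lt_zero j hjn).elim
  | succ n ih =>
    intro j hjn hj
    rcases Nat.lt_succ_iff_lt_or_eq.1 hjn with hjn | rfl
    · rw [fitMinors, interleavedMinor_fitMinor_of_lt _ hjn, ih j hjn hj]
    · refine interleavedMinor_fitMinor_self _ hj
        ((fitMinors z x j).interleavedCofactor_ne_zero hj fun h2 => ?_)
      rw [ih (j - 2) (by omega) (by omega)]
      exact hz _

theorem interleavedCofactor_fitMinors_ne_zero (hz : ∀ i, z i ≠ 0)
    (x : Matrix (Fin m) (Fin m) K) {n : ℕ} (hn : n < 2 * m - 1) :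
    (fitMinors z x n).interleavedCofactor n ≠ 0 :=
  interleavedCofactor_ne_zero _ hn fun h2 => by
    rw [interleavedMinor_fitMinors hz x n (n - 2) (by omega) (by omega)]
    exact hz _

theorem fitMinors_eq_self {x : Matrix (Fin m) (Fin m) K}
    (hx : ∀ i : Fin (2 * m - 1), x.interleavedMinor i = z i) (n : ℕ) : fitMinors z x n = x := by
  induction n with
  | zero => rfl
  | succ n ih => rw [fitMinors, ih, fitMinor_eq_self _ fun hn => hx ⟨n, hn⟩]

theorem continuous_fitMinors [TopologicalSpace K] [IsTopologicalDivisionRing K] (n : ℕ) :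
    Continuous fun p : Matrix (Fin m) (Fin m) K × (Fin (2 * m - 1) → {w : K // w ≠ 0}) =>
      fitMinors (fun i => (p.2 i : K)) p.1 n := by
  induction n with
  | zero => exact continuous_fst
  | succ n ih =>
    simp only [fitMinors, fitMinor]
    split_ifs with hn
    · refine ih.add ((continuous_single _ _).comp (Continuous.div₀ ?_ ?_ ?_))
      · exact ((continuous_apply _).comp continuous_snd).subtype_val.sub
          ((continuous_shiftedLeadingMinor _ _).comp ih)
      · exact (continuous_shiftedLeadingMinor _ _).comp ih
      · exact fun p => interleavedCofactor_fitMinors_ne_zero (fun i => (p.2 i).2) p.1 hn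
    · exact ih

end Fitting

theorem nonempty_homotopyEquiv_interleavedMinor_ne_zero (𝕜 : Type*) [RCLike 𝕜] (m : ℕ) :
    Nonempty ({A : Matrix (Fin m) (Fin m) 𝕜 // ∀ i : Fin (2 * m - 1), A.interleavedMinor i ≠ 0}
      ≃ₕ (Fin (2 * m - 1) → {w : 𝕜 // w ≠ 0})) :=
  nonempty_homotopyEquiv_of_contractible_sections
    ⟨Subtype.val, continuous_subtype_val⟩
    ⟨fun A i => ⟨A.1.interleavedMinor i, A.2 i⟩, continuous_pi fun _ =>
      ((continuous_shiftedLeadingMinor _ _).comp continuous_subtype_val).subtype_mk _⟩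
    ⟨fun p => ⟨fitMinors (fun i => (p.2 i : 𝕜)) p.1 (2 * m - 1), fun i => by
        rw [interleavedMinor_fitMinors (fun i => (p.2 i).2) _ _ i i.2 i.2]
        exact (p.2 i).2⟩,
      (continuous_fitMinors _).subtype_mk _⟩
    (fun A => Subtype.ext (fitMinors_eq_self (fun i => rfl) _))
    (fun x z => funext fun i =>
      Subtype.ext (interleavedMinor_fitMinors (fun i => (z i).2) _ _ i i.2 i.2))

end Matrix

/-- The space of complex `m × m` matrices `A` with `det (A^(k)) ≠ 0` for
`k = 1, …, m` and `det (Â^(j)) ≠ 0` for `j = 1, …, m - 1` (where `Â` deletes the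
first column of `A`) is homotopy equivalent to the `(2m-1)`-torus `(S¹)^(2m-1)`. -/
theorem modified_lu_complement_homotopy_torus (m : ℕ) :
    Nonempty (ContinuousMap.HomotopyEquiv
      {A : Matrix (Fin m) (Fin m) ℂ //
        (∀ k : ℕ, 1 ≤ k → ∀ hk : k ≤ m,
          (A.submatrix (Fin.castLE hk) (Fin.castLE hk)).det ≠ 0) ∧
        (∀ j : ℕ, 1 ≤ j → ∀ hj : j ≤ m - 1,
          (Matrix.of fun a b : Fin j =>
            A (Fin.castLE (by omega) a) ⟨(b : ℕ) + 1, by have := b.isLt; omega⟩).det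
            ≠ 0)}
      (Fin (2 * m - 1) → Metric.sphere (0 : ℂ) 1)) := by
  obtain ⟨e⟩ := nonempty_homotopyEquiv_interleavedMinor_ne_zero ℂ m
  obtain ⟨c⟩ := nonempty_homotopyEquiv_ne_zero_sphere ℂ
  refine ⟨((Homeomorph.refl _).subtype fun A => ?_).toHomotopyEquiv.trans
    (e.trans (.piCongrRight fun _ => c))⟩
  rw [Homeomorph.refl_apply, id, forall_interleavedMinor_ne_zero_iff]
  refine and_congr (forall₂_congr fun k _ => ⟨fun h hk => ?_, fun h hk => ?_⟩)
    (forall₂_congr fun j _ => ⟨fun h hj => ?_, fun h hj => ?_⟩)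
  · exact (A.shiftedLeadingMinor_zero_left hk).trans_ne (h hk)
  · exact (A.shiftedLeadingMinor_zero_left hk).symm.trans_ne (h hk)
  · exact (A.shiftedLeadingMinor_one_left hj).trans_ne (h (by omega))
  · exact (A.shiftedLeadingMinor_one_left (by omega)).symm.trans_ne (h (by omega))
end
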